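/- arXiv:1804.08160 — 10 statements merged into one kernel-verified Lean document; each statement's English description precedes it below -/
import Mathlib

section
/- Division theorem for echelons (Theorem 1). Let K be a field, n ≥ 1, and < a monomial order on ℕ^n. Let f_1,…,f_k ∈ K[[x_1,…,x_n]] be nonzero power series with initial exponents α_i = in(f_i), and let 0 ≤ s_i ≤ n be assigned scopes. Set A = ⋃_{i=1}^k (α_i + (ℕ^{s_i} × {0}^{n−s_i})) ⊆ ℕ^n. Then for every f ∈ K[[x_1,…,x_n]] there exist power series a_1,…,a_k and b in K[[x_1,…,x_n]] such that: each a_i depends only on x_1,…,x_{s_i}; the support of b is disjoint from A; f = Σ_{i=1}^k a_i·f_i + b; and, if f ≠ b, then in(f − b) = min{ α_i + in(a_i) : 1 ≤ i ≤ k, a_i ≠ 0 } with respect to <. -/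
/-!
The monomial order is a well-order on exponents (Dickson's lemma), so the coefficients of the
quotients and of the remainder can be fixed one exponent at a time, by well-founded recursion.
At the exponent `d`, let `r d` be the coefficient of `F` minus the contributions at `d` of the
quotient coefficients already fixed at exponents `≺ d`. If `d` lies in the echelon, `r d`
divided by the leading coefficient of `fᵢ` becomes the coefficient of `x^(d - αᵢ)` in `aᵢ` for
the first `i` with `d ∈ αᵢ + Δᵢ` (`Δᵢ = ℕ^{sᵢ} × 0`); otherwise `r d` becomes the coefficient
of `x^d` in `b`. Since `in(fᵢ) = αᵢ`, this new coefficient of `aᵢ` contributes nothing below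
`d` and exactly `r d` at `d`, which makes the identity hold at `d`.

An exponent `d` is of the form `u + αᵢ` with `x^u` in the support of `aᵢ` for at most one `i`,
so no two of the `aᵢ fᵢ` have the same initial exponent. Hence the smallest of the initial
exponents `αᵢ + in(aᵢ)` cannot cancel in the sum, and it is the initial exponent of `F - b`.
-/

open MvPowerSeries
open Finset.HasAntidiagonal
open scoped MonomialOrder Pointwise

namespace MonomialOrder

variable {σ : Type*}

theorem eq_or_rel_of_le (r : (σ →₀ ℕ) → (σ →₀ ℕ) → Prop)
    (add_rel_add_left : ∀ a b c, r a b → r (c + a) (c + b))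
    (zero_rel : ∀ a, a ≠ 0 → r 0 a) {a b : σ →₀ ℕ} (h : a ≤ b) : a = b ∨ r a b := by
  obtain ⟨c, rfl⟩ := exists_add_of_le h
  rcases eq_or_ne c 0 with rfl | hc
  · exact .inl (add_zero a).symm
  · simpa using Or.inr (add_rel_add_left 0 c a (zero_rel c hc))

open Classical in
noncomputable def ofLT [Finite σ] (lt : (σ →₀ ℕ) → (σ →₀ ℕ) → Prop)
    [IsStrictTotalOrder (σ →₀ ℕ) lt]
    (add_lt_add_left : ∀ a b c, lt a b → lt (c + a) (c + b))
    (zero_lt : ∀ a, a ≠ 0 → lt 0 a) : MonomialOrder σ where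
  syn := σ →₀ ℕ
  linearOrderSyn := linearOrderOfSTO lt
  isOrderedAddMonoid_syn := @IsOrderedAddMonoid.mk _ _ (linearOrderOfSTO lt).toPreorder
    (fun a b h c => h.imp (congrArg (· + c)) fun h => by
      simpa only [add_comm _ c] using add_lt_add_left a b c h)
    (fun a b h c => h.imp (congrArg (c + ·)) (add_lt_add_left a b c))
  toSyn := AddEquiv.refl _
  toSyn_monotone _ _ := eq_or_rel_of_le lt add_lt_add_left zero_lt
  -- Dickson's lemma: a linear order extending the product order of `σ →₀ ℕ` is a well-order.
  wellFoundedLT_syn := (@wellQuasiOrderedLE_iff_wellFoundedLT _ (linearOrderOfSTO lt)).mp <|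
    @Monotone.wellQuasiOrderedLE_of_wellQuasiOrderedLE_of_surjective _ _ _
      (linearOrderOfSTO lt).toPreorder _ id
      (fun _ _ => eq_or_rel_of_le lt add_lt_add_left zero_lt) Function.surjective_id

variable (m : MonomialOrder σ) {R : Type*}

def IsInitialExp [Semiring R] (f : MvPowerSeries σ R) (d : σ →₀ ℕ) : Prop :=
  coeff d f ≠ 0 ∧ ∀ e, coeff e f ≠ 0 → d ≼[m] e

variable {m}

theorem IsInitialExp.unique [Semiring R] {f : MvPowerSeries σ R} {d e : σ →₀ ℕ}
    (hd : m.IsInitialExp f d) (he : m.IsInitialExp f e) : d = e :=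
  m.toSyn.injective <| le_antisymm (hd.2 e he.1) (he.2 d hd.1)

theorem IsInitialExp.mul [Semiring R] [NoZeroDivisors R] {f g : MvPowerSeries σ R}
    {α β : σ →₀ ℕ} (hf : m.IsInitialExp f α) (hg : m.IsInitialExp g β) :
    m.IsInitialExp (f * g) (α + β) := by
  classical
  have hbound : ∀ p q, coeff p f ≠ 0 → coeff q g ≠ 0 →
      α + β ≼[m] p + q ∧ (p + q = α + β → p = α ∧ q = β) := by
    intro p q hp hq
    have hαp := hf.2 p hp
    have hβq := hg.2 q hq
    refine ⟨by simpa only [map_add] using add_le_add hαp hβq, fun h => ?_⟩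
    have h' : m.toSyn α + m.toSyn β = m.toSyn p + m.toSyn q := by
      simpa only [map_add] using congrArg m.toSyn h.symm
    obtain ⟨h₁, h₂⟩ := (add_eq_add_iff_eq_and_eq hαp hβq).mp h'
    exact ⟨(m.toSyn.injective h₁).symm, (m.toSyn.injective h₂).symm⟩
  refine ⟨?_, fun e he => ?_⟩
  · rw [coeff_mul, Finset.sum_eq_single (α, β)]
    · exact mul_ne_zero hf.1 hg.1
    · intro p hp hne
      by_contra h
      obtain ⟨hp₁, hp₂⟩ := (hbound p.1 p.2 (left_ne_zero_of_mul h) (right_ne_zero_of_mul h)).2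
        (mem_antidiagonal.mp hp)
      exact hne (Prod.ext hp₁ hp₂)
    · exact fun h => (h (mem_antidiagonal.mpr rfl)).elim
  · rw [coeff_mul] at he
    obtain ⟨p, hp, hne⟩ := Finset.exists_ne_zero_of_sum_ne_zero he
    rw [← mem_antidiagonal.mp hp]
    exact (hbound p.1 p.2 (left_ne_zero_of_mul hne) (right_ne_zero_of_mul hne)).1

theorem IsInitialExp.sum [Semiring R] {ι : Type*} {s : Finset ι} {g : ι → MvPowerSeries σ R}
    {i₀ : ι} {β : σ →₀ ℕ} (hi₀ : i₀ ∈ s) (h₀ : m.IsInitialExp (g i₀) β)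
    (h : ∀ i ∈ s, i ≠ i₀ → ∀ e, coeff e (g i) ≠ 0 → β ≺[m] e) :
    m.IsInitialExp (∑ i ∈ s, g i) β := by
  refine ⟨?_, fun e he => ?_⟩
  · rw [map_sum, Finset.sum_eq_single_of_mem i₀ hi₀ fun i hi hne => ?_]
    · exact h₀.1
    · by_contra hβ
      exact lt_irrefl _ (h i hi hne β hβ)
  · rw [map_sum] at he
    obtain ⟨i, hi, hne⟩ := Finset.exists_ne_zero_of_sum_ne_zero he
    obtain rfl | hi₀ := eq_or_ne i i₀
    · exact h₀.2 e hne
    · exact (h i hi hi₀ e hne).le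

theorem coeff_mul_of_forall_le_add [Semiring R] {f g : MvPowerSeries σ R} {α d : σ →₀ ℕ}
    (hf : ∀ e, coeff e f ≠ 0 → α ≼[m] e) (hg : ∀ u, coeff u g ≠ 0 → d ≼[m] u + α) :
    coeff d (g * f) = if α ≤ d then coeff (d - α) g * coeff α f else 0 := by
  classical
  have hsnd : ∀ p ∈ antidiagonal d, coeff p.1 g * coeff p.2 f ≠ 0 → p.2 = α := by
    intro p hp hne
    have h₁ := hg p.1 (left_ne_zero_of_mul hne)
    rw [← mem_antidiagonal.mp hp, map_add, map_add] at h₁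
    exact m.toSyn.injective <| le_antisymm (le_of_add_le_add_left h₁)
      (hf p.2 (right_ne_zero_of_mul hne))
  rw [coeff_mul]
  split_ifs with hαd
  · refine Finset.sum_eq_single_of_mem (d - α, α) ?_ fun p hp hne => ?_
    · exact mem_antidiagonal.mpr (tsub_add_cancel_of_le hαd)
    · by_contra hprod
      have hp₂ := hsnd p hp hprod
      refine hne (Prod.ext ?_ hp₂)
      rw [← hp₂]
      exact eq_tsub_of_add_eq (mem_antidiagonal.mp hp)
  · refine Finset.sum_eq_zero fun p hp => ?_
    by_contra hprod
    rw [← hsnd p hp hprod, ← mem_antidiagonal.mp hp] at hαd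
    exact hαd le_add_self

theorem isInitialExp_sum_mul {ι : Type*} [Fintype ι] [Semiring R] [NoZeroDivisors R]
    {q f : ι → MvPowerSeries σ R} {α : ι → σ →₀ ℕ} (hf : ∀ i, m.IsInitialExp (f i) (α i))
    (hq : ∀ i j u v, coeff u (q i) ≠ 0 → coeff v (q j) ≠ 0 → u + α i = v + α j → i = j)
    {i₀ : ι} {β : σ →₀ ℕ} (hβ : m.IsInitialExp (q i₀) β)
    (hmin : ∀ i u, coeff u (q i) ≠ 0 → β + α i₀ ≼[m] u + α i) :
    m.IsInitialExp (∑ i, q i * f i) (β + α i₀) := by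
  classical
  refine IsInitialExp.sum (Finset.mem_univ i₀) (hβ.mul (hf i₀)) fun i _ hi e he => ?_
  rw [coeff_mul] at he
  obtain ⟨p, hp, hne⟩ := Finset.exists_ne_zero_of_sum_ne_zero he
  have hp₁ := left_ne_zero_of_mul hne
  have h₁ := hmin i p.1 hp₁
  have h₂ : p.1 + α i ≼[m] e := by
    rw [← mem_antidiagonal.mp hp, map_add, map_add]
    exact add_le_add le_rfl ((hf i).2 p.2 (right_ne_zero_of_mul hne))
  refine lt_of_le_of_ne (h₁.trans h₂) fun heq => hi ?_
  exact hq i i₀ p.1 β hp₁ hβ.1 (m.toSyn.injective (le_antisymm (h₂.trans heq.ge) h₁))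

theorem exists_isInitialExp_sum_mul {ι : Type*} [Fintype ι] [Semiring R] [NoZeroDivisors R]
    {q f : ι → MvPowerSeries σ R} {α β : ι → σ →₀ ℕ} (hf : ∀ i, m.IsInitialExp (f i) (α i))
    (hq : ∀ i j u v, coeff u (q i) ≠ 0 → coeff v (q j) ≠ 0 → u + α i = v + α j → i = j)
    (hβ : ∀ i, q i ≠ 0 → m.IsInitialExp (q i) (β i)) (hne : ∃ i, q i ≠ 0) :
    ∃ i₀, q i₀ ≠ 0 ∧ m.IsInitialExp (∑ i, q i * f i) (β i₀ + α i₀) ∧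
      ∀ i, q i ≠ 0 → β i₀ + α i₀ ≼[m] β i + α i := by
  classical
  obtain ⟨i₀, hi₀, hmin⟩ := Finset.exists_min_image {i | q i ≠ 0} (fun i => m.toSyn (β i + α i))
    (by simpa [Finset.filter_nonempty_iff] using hne)
  simp only [Finset.mem_filter, Finset.mem_univ, true_and] at hi₀ hmin
  refine ⟨i₀, hi₀, isInitialExp_sum_mul hf hq (hβ i₀ hi₀) fun i u hu => ?_, hmin⟩
  have hqi : q i ≠ 0 := fun h => hu (by rw [h, map_zero])
  refine (hmin i hqi).trans ?_
  rw [map_add, map_add]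
  exact add_le_add ((hβ i hqi).2 u hu) le_rfl

section EchelonDivision

variable {ι K : Type*} [LinearOrder ι] [LocallyFiniteOrderBot ι] [Field K]
  (f : ι → MvPowerSeries σ K) (α : ι → σ →₀ ℕ) (Δ : ι → Set (σ →₀ ℕ))

noncomputable def echelonQuotient (r : (σ →₀ ℕ) → K) (i : ι) : MvPowerSeries σ K :=
  fun u => (disjointed (fun j => α j +ᵥ Δ j) i).indicator r (u + α i) / coeff (α i) (f i)

theorem coeff_echelonQuotient (r : (σ →₀ ℕ) → K) (i : ι) (u : σ →₀ ℕ) :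
    coeff u (echelonQuotient f α Δ r i) =
      (disjointed (fun j => α j +ᵥ Δ j) i).indicator r (u + α i) / coeff (α i) (f i) :=
  rfl

variable {f α Δ} in
theorem coeff_echelonQuotient_mul {i : ι} (hf : m.IsInitialExp (f i) (α i))
    (r : (σ →₀ ℕ) → K) (d : σ →₀ ℕ) :
    coeff d (echelonQuotient f α Δ r i * f i) =
      coeff d (echelonQuotient f α Δ ({y | y ≺[m] d}.indicator r) i * f i) +
        (disjointed (fun j => α j +ᵥ Δ j) i).indicator r d := by
  classical
  rw [← sub_eq_iff_eq_add', ← map_sub, ← sub_mul, coeff_mul_of_forall_le_add hf.2]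
  · split_ifs with hαd
    · simp only [map_sub, coeff_echelonQuotient, tsub_add_cancel_of_le hαd, ← sub_div,
        div_mul_cancel₀ _ hf.1]
      simp
    · refine (Set.indicator_of_notMem (fun hd => hαd ?_) _).symm
      obtain ⟨e, -, rfl⟩ := Set.mem_vadd_set.mp (disjointed_subset _ i hd)
      exact le_self_add
  · intro u hu
    by_contra hlt
    apply hu
    simp only [map_sub, coeff_echelonQuotient, Set.indicator_apply, Set.mem_ofPred_eq,
      not_le.mp hlt, if_true, sub_self]

variable (m) [Fintype ι] (F : MvPowerSeries σ K)

noncomputable def echelonResidual : (σ →₀ ℕ) → K :=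
  (InvImage.wf m.toSyn wellFounded_lt).fix fun d r =>
    coeff d (F - ∑ i,
      echelonQuotient f α Δ (fun y => if h : y ≺[m] d then r y h else 0) i * f i)

theorem echelonResidual_eq (d : σ →₀ ℕ) :
    echelonResidual m f α Δ F d = coeff d (F - ∑ i,
      echelonQuotient f α Δ ({y | y ≺[m] d}.indicator (echelonResidual m f α Δ F)) i * f i) := by
  rw [echelonResidual, WellFounded.fix_eq]
  congr! with i y
  simp [Set.indicator_apply]

noncomputable def echelonRemainder : MvPowerSeries σ K :=
  (⋃ i, α i +ᵥ Δ i)ᶜ.indicator (echelonResidual m f α Δ F)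

theorem coeff_echelonRemainder (d : σ →₀ ℕ) :
    coeff d (echelonRemainder m f α Δ F) =
      (⋃ i, α i +ᵥ Δ i)ᶜ.indicator (echelonResidual m f α Δ F) d :=
  rfl

variable {m f α Δ} in
theorem coeff_sum_echelonQuotient_mul (hf : ∀ i, m.IsInitialExp (f i) (α i))
    (r : (σ →₀ ℕ) → K) (d : σ →₀ ℕ) :
    coeff d (∑ i, echelonQuotient f α Δ r i * f i) =
      coeff d (∑ i, echelonQuotient f α Δ ({y | y ≺[m] d}.indicator r) i * f i) +
        (⋃ i, α i +ᵥ Δ i).indicator r d := by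
  rw [map_sum, map_sum, Finset.sum_congr rfl fun i _ => coeff_echelonQuotient_mul (hf i) r d,
    Finset.sum_add_distrib]
  have := Finset.indicator_biUnion_apply Finset.univ _
    ((disjoint_disjointed (fun i => α i +ᵥ Δ i)).set_pairwise _) (f := r) d
  rw [← iUnion_disjointed, ← this]
  simp only [Finset.mem_univ, Set.iUnion_true]

variable {f α} in
theorem exists_echelon_division (hf : ∀ i, m.IsInitialExp (f i) (α i)) :
    ∃ (q : ι → MvPowerSeries σ K) (r : MvPowerSeries σ K),
      (∀ i u, coeff u (q i) ≠ 0 → u ∈ Δ i) ∧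
      (∀ d, coeff d r ≠ 0 → d ∉ ⋃ i, α i +ᵥ Δ i) ∧
      F = ∑ i, q i * f i + r ∧
      (∀ i j u v, coeff u (q i) ≠ 0 → coeff v (q j) ≠ 0 → u + α i = v + α j → i = j) := by
  set R := echelonResidual m f α Δ F
  have hcell : ∀ i u, coeff u (echelonQuotient f α Δ R i) ≠ 0 →
      u + α i ∈ disjointed (fun j => α j +ᵥ Δ j) i := fun i u hu => by
    by_contra hn
    exact hu (by rw [coeff_echelonQuotient, Set.indicator_of_notMem hn, zero_div])
  refine ⟨echelonQuotient f α Δ R, echelonRemainder m f α Δ F, fun i u hu => ?_,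
    fun d hd hmem => hd (Set.indicator_of_notMem (not_not_intro hmem) R), ?_,
    fun i j u v hu hv huv => ?_⟩
  · obtain ⟨e, he, heu⟩ := Set.mem_vadd_set.mp (disjointed_subset _ i (hcell i u hu))
    rw [vadd_eq_add, add_comm, add_left_inj] at heu
    rwa [← heu]
  · ext d
    rw [map_add, coeff_sum_echelonQuotient_mul hf, add_assoc, coeff_echelonRemainder,
      Set.indicator_self_add_compl_apply, show R d = _ from echelonResidual_eq m f α Δ F d,
      map_sub, add_sub_cancel]
  · by_contra hij
    exact Set.disjoint_left.mp (disjoint_disjointed _ hij) (hcell i u hu) (huv ▸ hcell j v hv)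

end EchelonDivision

end MonomialOrder

theorem echelon_division_general
    {K : Type*} [Field K] {n k : ℕ}
    -- a monomial order on ℕ^n : a strict linear order compatible with addition, 0 least
    (lt : (Fin n →₀ ℕ) → (Fin n →₀ ℕ) → Prop)
    (hlt_total : ∀ a b, lt a b ∨ a = b ∨ lt b a)
    (hlt_irrefl : ∀ a, ¬ lt a a)
    (hlt_trans : ∀ a b c, lt a b → lt b c → lt a c)
    (hlt_add : ∀ a b c, lt a b → lt (c + a) (c + b))
    (hlt_zero : ∀ a : Fin n →₀ ℕ, a ≠ 0 → lt 0 a)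
    -- the initial-exponent function associated to the monomial order
    (ini : MvPowerSeries (Fin n) K → (Fin n →₀ ℕ))
    (hini : ∀ F : MvPowerSeries (Fin n) K, F ≠ 0 →
      MvPowerSeries.coeff (ini F) F ≠ 0 ∧
        ∀ d, MvPowerSeries.coeff d F ≠ 0 → ¬ lt d (ini F))
    -- the divisors with their assigned scopes
    (f : Fin k → MvPowerSeries (Fin n) K) (hf : ∀ i, f i ≠ 0)
    (s : Fin k → ℕ)
    -- the set A = ⋃ᵢ (αᵢ + (ℕ^{sᵢ} × 0^{n-sᵢ}))
    (A : Set (Fin n →₀ ℕ))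
    (hA : A = ⋃ i : Fin k,
      {d | ∃ e : Fin n →₀ ℕ, (∀ j : Fin n, s i ≤ (j : ℕ) → e j = 0) ∧ d = ini (f i) + e})
    (F : MvPowerSeries (Fin n) K) :
    ∃ (a : Fin k → MvPowerSeries (Fin n) K) (b : MvPowerSeries (Fin n) K),
      -- each aᵢ depends only on x₁,…,x_{sᵢ}
      (∀ i, ∀ d, MvPowerSeries.coeff d (a i) ≠ 0 → ∀ j : Fin n, s i ≤ (j : ℕ) → d j = 0) ∧
      -- the support of b is disjoint from A
      (∀ d, MvPowerSeries.coeff d b ≠ 0 → d ∉ A) ∧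
      -- the division identity
      F = (∑ i, a i * f i) + b ∧
      -- in(F - b) = min { αᵢ + in(aᵢ) : aᵢ ≠ 0 }
      (F ≠ b →
        (∃ i, a i ≠ 0 ∧ ini (F - b) = ini (f i) + ini (a i)) ∧
        (∀ i, a i ≠ 0 → ¬ lt (ini (f i) + ini (a i)) (ini (F - b)))) := by
  have : IsStrictTotalOrder (Fin n →₀ ℕ) lt :=
    { trichotomous := fun a b h₁ h₂ => ((hlt_total a b).resolve_left h₁).resolve_right h₂
      irrefl := hlt_irrefl
      trans := hlt_trans }
  let m := MonomialOrder.ofLT lt hlt_add hlt_zero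
  have hm_ini : ∀ G ≠ 0, m.IsInitialExp G (ini G) := fun G hG =>
    ⟨(hini G hG).1, fun d hd => not_lt.mp ((hini G hG).2 d hd)⟩
  have hf_ini := fun i => hm_ini _ (hf i)
  obtain ⟨a, b, hscope, hb, hdiv, hdisj⟩ := m.exists_echelon_division
    (fun i => {e : Fin n →₀ ℕ | ∀ j : Fin n, s i ≤ (j : ℕ) → e j = 0}) F hf_ini
  refine ⟨a, b, hscope, fun d hd => ?_, hdiv, fun hne => ?_⟩
  · subst hA
    simpa [Set.mem_vadd_set, eq_comm] using hb d hd
  have hFb : F - b = ∑ i, a i * f i := by rw [hdiv, add_sub_cancel_right]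
  have hsupp : ∃ i, a i ≠ 0 := by
    by_contra! h
    exact sub_ne_zero.mpr hne (by simp [hFb, h])
  obtain ⟨i₀, hi₀, hsum, hmin⟩ :=
    m.exists_isInitialExp_sum_mul hf_ini hdisj (fun i hi => hm_ini _ hi) hsupp
  have hFb_ini : ini (F - b) = ini (a i₀) + ini (f i₀) :=
    (hm_ini _ (sub_ne_zero.mpr hne)).unique (hFb ▸ hsum)
  refine ⟨⟨i₀, hi₀, by rw [hFb_ini, add_comm]⟩, fun i hi => ?_⟩
  rw [hFb_ini, add_comm (ini (f i))]
  exact not_lt.mpr (hmin i hi)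

theorem echelon_division
    {K : Type*} [Field K] {n k : ℕ} (hn : 1 ≤ n)
    -- a monomial order on ℕ^n : a strict linear order compatible with addition, 0 least
    (lt : (Fin n →₀ ℕ) → (Fin n →₀ ℕ) → Prop)
    (hlt_total : ∀ a b, lt a b ∨ a = b ∨ lt b a)
    (hlt_irrefl : ∀ a, ¬ lt a a)
    (hlt_trans : ∀ a b c, lt a b → lt b c → lt a c)
    (hlt_add : ∀ a b c, lt a b → lt (c + a) (c + b))
    (hlt_zero : ∀ a : Fin n →₀ ℕ, a ≠ 0 → lt 0 a)
    -- the initial-exponent function associated to the monomial order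
    (ini : MvPowerSeries (Fin n) K → (Fin n →₀ ℕ))
    (hini : ∀ F : MvPowerSeries (Fin n) K, F ≠ 0 →
      MvPowerSeries.coeff (ini F) F ≠ 0 ∧
        ∀ d, MvPowerSeries.coeff d F ≠ 0 → ¬ lt d (ini F))
    -- the divisors with their assigned scopes
    (f : Fin k → MvPowerSeries (Fin n) K) (hf : ∀ i, f i ≠ 0)
    (s : Fin k → ℕ) (hs : ∀ i, s i ≤ n)
    -- the set A = ⋃ᵢ (αᵢ + (ℕ^{sᵢ} × 0^{n-sᵢ}))
    (A : Set (Fin n →₀ ℕ))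
    (hA : A = ⋃ i : Fin k,
      {d | ∃ e : Fin n →₀ ℕ, (∀ j : Fin n, s i ≤ (j : ℕ) → e j = 0) ∧ d = ini (f i) + e})
    (F : MvPowerSeries (Fin n) K) :
    ∃ (a : Fin k → MvPowerSeries (Fin n) K) (b : MvPowerSeries (Fin n) K),
      -- each aᵢ depends only on x₁,…,x_{sᵢ}
      (∀ i, ∀ d, MvPowerSeries.coeff d (a i) ≠ 0 → ∀ j : Fin n, s i ≤ (j : ℕ) → d j = 0) ∧
      -- the support of b is disjoint from A
      (∀ d, MvPowerSeries.coeff d b ≠ 0 → d ∉ A) ∧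
      -- the division identity
      F = (∑ i, a i * f i) + b ∧
      -- in(F - b) = min { αᵢ + in(aᵢ) : aᵢ ≠ 0 }
      (F ≠ b →
        (∃ i, a i ≠ 0 ∧ ini (F - b) = ini (f i) + ini (a i)) ∧
        (∀ i, a i ≠ 0 → ¬ lt (ini (f i) + ini (a i)) (ini (F - b)))) :=
  echelon_division_general lt hlt_total hlt_irrefl hlt_trans hlt_add hlt_zero ini hini f hf s A hA F
end

section
/- Uniqueness in echelon division with prescribed partition (Remark (a) to Theorem 1). Let K be a field, < a monomial order on ℕ^n, and f_1,…,f_k ∈ K[[x_1,…,x_n]] nonzero with initial exponents α_i = in(f_i) and assigned scopes 0 ≤ s_i ≤ n. Set A = ⋃_{i=1}^k (α_i + (ℕ^{s_i} × {0}^{n−s_i})) and choose a partition A = A_1 ⊔ … ⊔ A_k with A_i ⊆ α_i + (ℕ^{s_i} × {0}^{n−s_i}) for each i. Then for every f ∈ K[[x_1,…,x_n]] there exist UNIQUE power series a_1,…,a_k, b ∈ K[[x_1,…,x_n]] such that f = Σ_{i=1}^k a_i·f_i + b, the support of b is disjoint from A, and for each i the translated support supp(a_i) + α_i is contained in A_i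 (in particular each a_i depends only on x_1,…,x_{s_i}). -/
/-!
The monomial order is a well-order (Dickson's lemma). If the coefficients of `aᵢ` at all `u` with
`u + αᵢ < d` vanish, the coefficient of `aᵢ fᵢ` at `d` is just `coeff (d - αᵢ) aᵢ` times the leading
coefficient of `fᵢ`. As the `Aᵢ` are disjoint and `b` vanishes on `A`, the coefficient at `d` of
`F = ∑ aᵢ fᵢ + b` therefore involves exactly one unknown not already fixed below `d`. Solving for it
by well-founded recursion gives existence; well-founded induction on the difference of two
solutions gives uniqueness.
-/

open MvPowerSeries Function

theorem Finsupp.wellFounded_of_add_compatible {σ : Type*} [Finite σ]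
    {lt : (σ →₀ ℕ) → (σ →₀ ℕ) → Prop}
    (hlt_irrefl : ∀ a, ¬ lt a a) (hlt_trans : ∀ a b c, lt a b → lt b c → lt a c)
    (hlt_add : ∀ a b c, lt a b → lt (c + a) (c + b)) (hlt_zero : ∀ a, a ≠ 0 → lt 0 a) :
    WellFounded lt := by
  have : IsStrictOrder (σ →₀ ℕ) lt := { irrefl := hlt_irrefl, trans := hlt_trans }
  have eq_or_lt_of_le : ∀ a b : σ →₀ ℕ, a ≤ b → a = b ∨ lt a b := by
    intro a b hab
    obtain ⟨c, rfl⟩ := le_iff_exists_add.mp hab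
    rcases eq_or_ne c 0 with rfl | hc
    · exact .inl (add_zero a).symm
    · have h := hlt_add 0 c a (hlt_zero c hc)
      rw [add_zero] at h
      exact .inr h
  rw [RelEmbedding.wellFounded_iff_isEmpty]
  refine ⟨fun g => ?_⟩
  obtain ⟨m, m', hmm', hle⟩ := wellQuasiOrdered_le (fun i => g i)
  have hdesc : lt (g m') (g m) := g.map_rel_iff.mpr hmm'
  rcases eq_or_lt_of_le _ _ hle with heq | hlt
  · exact hlt_irrefl _ (heq ▸ hdesc)
  · exact hlt_irrefl _ (hlt_trans _ _ _ hlt hdesc)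

theorem coeff_mul_of_coeff_eq_zero_of_lt {σ R : Type*} [CommSemiring R]
    {lt : (σ →₀ ℕ) → (σ →₀ ℕ) → Prop} (hlt_add : ∀ a b c, lt a b → lt (c + a) (c + b))
    {f : MvPowerSeries σ R} {α : σ →₀ ℕ} (hf : ∀ v, coeff v f ≠ 0 → v = α ∨ lt α v)
    {a : MvPowerSeries σ R} {d : σ →₀ ℕ} (ha : ∀ u, lt (u + α) d → coeff u a = 0) :
    coeff d (a * f) = if α ≤ d then coeff (d - α) a * coeff α f else 0 := by
  classical
  rw [← coeff_mul_monomial, coeff_mul, coeff_mul]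
  refine Finset.sum_congr rfl fun ⟨u, v⟩ huv => ?_
  rw [Finset.HasAntidiagonal.mem_antidiagonal] at huv
  dsimp only
  by_cases hv : v = α
  · rw [hv, coeff_monomial_same]
  rw [coeff_monomial_ne hv, mul_zero]
  rcases eq_or_ne (coeff v f) 0 with h0 | h0
  · rw [h0, mul_zero]
  · rw [ha u (huv ▸ hlt_add _ _ u ((hf v h0).resolve_left hv)), zero_mul]

section
variable {σ ι R : Type*} [Fintype ι]

def IsEchelonDivision [CommSemiring R] (f : ι → MvPowerSeries σ R) (α : ι → σ →₀ ℕ)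
    (P : ι → Set (σ →₀ ℕ)) (F : MvPowerSeries σ R) (a : ι → MvPowerSeries σ R)
    (b : MvPowerSeries σ R) : Prop :=
  F = ∑ i, a i * f i + b ∧ (∀ d, coeff d b ≠ 0 → d ∉ ⋃ i, P i) ∧
    ∀ i d, coeff d (a i) ≠ 0 → d + α i ∈ P i

variable [CommRing R] {f : ι → MvPowerSeries σ R} {α : ι → σ →₀ ℕ} {P : ι → Set (σ →₀ ℕ)}
  {F F' : MvPowerSeries σ R} {a a' : ι → MvPowerSeries σ R} {b b' : MvPowerSeries σ R}

theorem IsEchelonDivision.sub (h : IsEchelonDivision f α P F a b)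
    (h' : IsEchelonDivision f α P F' a' b') :
    IsEchelonDivision f α P (F - F') (a - a') (b - b') := by
  obtain ⟨hF, hb, ha⟩ := h
  obtain ⟨hF', hb', ha'⟩ := h'
  refine ⟨by simp only [hF, hF', Pi.sub_apply, sub_mul, Finset.sum_sub_distrib]; ring, ?_, ?_⟩
  · intro d hd
    rw [map_sub] at hd
    by_cases h0 : coeff d b = 0
    · exact hb' d (by rintro h; simp [h0, h] at hd)
    · exact hb d h0
  · intro i d hd
    rw [Pi.sub_apply, map_sub] at hd
    by_cases h0 : coeff d (a i) = 0
    · exact ha' i d (by rintro h; simp [h0, h] at hd)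
    · exact ha i d h0

variable [NoZeroDivisors R] {lt : (σ →₀ ℕ) → (σ →₀ ℕ) → Prop}

theorem IsEchelonDivision.eq_zero (hwf : WellFounded lt)
    (hlt_add : ∀ a b c, lt a b → lt (c + a) (c + b))
    (hf : ∀ i v, coeff v (f i) ≠ 0 → v = α i ∨ lt (α i) v) (hlc : ∀ i, coeff (α i) (f i) ≠ 0)
    (hP : Pairwise (Disjoint on P)) (h : IsEchelonDivision f α P 0 a b) : a = 0 ∧ b = 0 := by
  obtain ⟨hF, hb, ha⟩ := h
  suffices key : ∀ d, (∀ i u, u + α i = d → coeff u (a i) = 0) ∧ coeff d b = 0 from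
    ⟨funext fun i => ext fun u => (key _).1 i u rfl, ext fun d => (key d).2⟩
  intro d
  induction d using hwf.induction with | _ d ih
  -- `T i` is the coefficient of `a i` that the leading term of `f i` carries to `d`
  set T : ι → R := fun i => if α i ≤ d then coeff (d - α i) (a i) else 0
  have hT : ∀ i u, u + α i = d → coeff u (a i) = T i := by
    rintro i u rfl
    simp [T]
  have hTP : ∀ i, T i ≠ 0 → d ∈ P i := by
    intro i hi
    simp only [T] at hi
    split_ifs at hi with hle
    · simpa [tsub_add_cancel_of_le hle] using ha i _ hi
    · exact (hi rfl).elim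
  have hsum : ∑ i, T i * coeff (α i) (f i) + coeff d b = 0 := by
    rw [← map_zero (coeff d), hF, map_add, map_sum]
    congr 1
    refine Finset.sum_congr rfl fun i _ => ?_
    rw [coeff_mul_of_coeff_eq_zero_of_lt hlt_add (hf i) fun u hu => (ih _ hu).1 i u rfl]
    simp only [T, ite_mul, zero_mul]
  have hT0 : ∀ i, T i = 0 := by
    by_cases hd : ∃ j, d ∈ P j
    · obtain ⟨j, hj⟩ := hd
      have hbd : coeff d b = 0 := by_contra fun h => hb d h (Set.mem_iUnion.2 ⟨j, hj⟩)
      have hother : ∀ i, i ≠ j → T i = 0 := fun i hij =>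
        by_contra fun hi => Set.disjoint_left.1 (hP hij) (hTP i hi) hj
      rw [hbd, add_zero, Finset.sum_eq_single j (fun i _ hij => by rw [hother i hij, zero_mul])
        (by simp)] at hsum
      intro i
      rcases eq_or_ne i j with rfl | hij
      · exact (mul_eq_zero.1 hsum).resolve_right (hlc i)
      · exact hother i hij
    · exact fun i => by_contra fun hi => hd ⟨i, hTP i hi⟩
  refine ⟨fun i u hu => (hT i u hu).trans (hT0 i), ?_⟩
  simpa [hT0] using hsum

theorem IsEchelonDivision.unique (hwf : WellFounded lt)
    (hlt_add : ∀ a b c, lt a b → lt (c + a) (c + b))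
    (hf : ∀ i v, coeff v (f i) ≠ 0 → v = α i ∨ lt (α i) v) (hlc : ∀ i, coeff (α i) (f i) ≠ 0)
    (hP : Pairwise (Disjoint on P)) (h : IsEchelonDivision f α P F a b)
    (h' : IsEchelonDivision f α P F a' b') : a = a' ∧ b = b' := by
  have hdiff := h.sub h'
  rw [sub_self] at hdiff
  simpa [sub_eq_zero] using hdiff.eq_zero hwf hlt_add hf hlc hP

end

section
variable {σ ι K : Type*}

noncomputable def echelonQuotients [Semiring K] (α : ι → σ →₀ ℕ) (P : ι → Set (σ →₀ ℕ))
    (c : (σ →₀ ℕ) → ι → K) (i : ι) : MvPowerSeries σ K :=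
  fun u => (P i).indicator (c · i) (u + α i)

theorem coeff_echelonQuotients [Semiring K] (α : ι → σ →₀ ℕ) (P : ι → Set (σ →₀ ℕ)) (c : (σ →₀ ℕ) → ι → K)
    (i : ι) (u : σ →₀ ℕ) :
    coeff u (echelonQuotients α P c i) = (P i).indicator (c · i) (u + α i) :=
  rfl

variable [Field K] [Fintype ι] {f : ι → MvPowerSeries σ K} {α : ι → σ →₀ ℕ} {P : ι → Set (σ →₀ ℕ)}
  {lt : (σ →₀ ℕ) → (σ →₀ ℕ) → Prop}

theorem exists_isEchelonDivision (hwf : WellFounded lt) (hlt_irrefl : ∀ a, ¬ lt a a)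
    (hlt_add : ∀ a b c, lt a b → lt (c + a) (c + b))
    (hf : ∀ i v, coeff v (f i) ≠ 0 → v = α i ∨ lt (α i) v) (hlc : ∀ i, coeff (α i) (f i) ≠ 0)
    (hP : Pairwise (Disjoint on P)) (hPα : ∀ i, ∀ d ∈ P i, α i ≤ d) (F : MvPowerSeries σ K) :
    ∃ a b, IsEchelonDivision f α P F a b := by
  classical
  obtain ⟨G, hG⟩ : ∃ G : (σ →₀ ℕ) → ι → K, ∀ d i, G d i =
      (coeff d F -
        coeff d (∑ j, echelonQuotients α P (fun e j => if lt e d then G e j else 0) j * f j))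
        / coeff (α i) (f i) :=
    ⟨hwf.fix fun d rec i => (coeff d F - coeff d
        (∑ j, echelonQuotients α P (fun e j => if h : lt e d then rec e h j else 0) j * f j))
        / coeff (α i) (f i),
      fun d i => by rw [hwf.fix_eq]; simp only [dite_eq_ite]⟩
  set a := echelonQuotients α P G
  refine ⟨a, F - ∑ i, a i * f i, (add_sub_cancel _ _).symm, ?_, fun i u hu => ?_⟩
  · rintro d hd hdP
    obtain ⟨j, hj⟩ := Set.mem_iUnion.1 hdP
    set a' := echelonQuotients α P (fun e j => if lt e d then G e j else 0)
    have hdiff : ∀ i, coeff d ((a i - a' i) * f i) =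
        if d ∈ P i then G d i * coeff (α i) (f i) else 0 := by
      intro i
      rw [coeff_mul_of_coeff_eq_zero_of_lt hlt_add (hf i) fun u hu => by
        simp [a, a', coeff_echelonQuotients, Set.indicator_apply, hu]]
      by_cases hdi : d ∈ P i
      · simp [a, a', coeff_echelonQuotients, tsub_add_cancel_of_le (hPα i d hdi), hPα i d hdi, hdi,
          hlt_irrefl]
      · split_ifs with hle
        · simp [a, a', coeff_echelonQuotients, tsub_add_cancel_of_le hle, hdi]
        · rfl
    have hsum : ∑ i, coeff d ((a i - a' i) * f i) = G d j * coeff (α j) (f j) := by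
      simp only [hdiff]
      rw [Finset.sum_eq_single j
        (fun i _ hij => if_neg fun hi => Set.disjoint_left.1 (hP hij) hi hj) (by simp), if_pos hj]
    rw [hG, div_mul_cancel₀ _ (hlc j)] at hsum
    simp only [sub_mul, map_sub, Finset.sum_sub_distrib, ← map_sum] at hsum
    exact hd (by rw [map_sub]; linear_combination -hsum)
  · by_contra hP'
    simp [a, coeff_echelonQuotients, hP'] at hu

end

theorem echelon_division_unique_general
    {K : Type*} [Field K] {n k : ℕ}
    -- a monomial order on ℕ^n : a strict linear order compatible with addition, 0 least
    (lt : (Fin n →₀ ℕ) → (Fin n →₀ ℕ) → Prop)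
    (hlt_total : ∀ a b, lt a b ∨ a = b ∨ lt b a)
    (hlt_irrefl : ∀ a, ¬ lt a a)
    (hlt_trans : ∀ a b c, lt a b → lt b c → lt a c)
    (hlt_add : ∀ a b c, lt a b → lt (c + a) (c + b))
    (hlt_zero : ∀ a : Fin n →₀ ℕ, a ≠ 0 → lt 0 a)
    -- the initial-exponent function associated to the monomial order
    (ini : MvPowerSeries (Fin n) K → (Fin n →₀ ℕ))
    (hini : ∀ F : MvPowerSeries (Fin n) K, F ≠ 0 →
      MvPowerSeries.coeff (ini F) F ≠ 0 ∧
        ∀ d, MvPowerSeries.coeff d F ≠ 0 → ¬ lt d (ini F))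
    -- the divisors with their assigned scopes
    (f : Fin k → MvPowerSeries (Fin n) K) (hf : ∀ i, f i ≠ 0)
    (s : Fin k → ℕ)
    (A : Set (Fin n →₀ ℕ))
    -- a partition A = A₁ ⊔ ⋯ ⊔ A_k with Aᵢ ⊆ αᵢ + (ℕ^{sᵢ} × 0^{n-sᵢ})
    (APart : Fin k → Set (Fin n →₀ ℕ))
    (hcover : A = ⋃ i : Fin k, APart i)
    (hdisj : ∀ i j : Fin k, i ≠ j → APart i ∩ APart j = ∅)
    (hsub : ∀ i : Fin k, APart i ⊆
      {d | ∃ e : Fin n →₀ ℕ, (∀ j : Fin n, s i ≤ (j : ℕ) → e j = 0) ∧ d = ini (f i) + e})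
    (F : MvPowerSeries (Fin n) K) :
    ∃! p : (Fin k → MvPowerSeries (Fin n) K) × MvPowerSeries (Fin n) K,
      -- the division identity
      F = (∑ i, p.1 i * f i) + p.2 ∧
      -- the support of b is disjoint from A
      (∀ d, MvPowerSeries.coeff d p.2 ≠ 0 → d ∉ A) ∧
      -- supp(aᵢ) + αᵢ ⊆ Aᵢ for every i
      (∀ i, ∀ d, MvPowerSeries.coeff d (p.1 i) ≠ 0 → d + ini (f i) ∈ APart i) := by
  subst hcover
  have hwf := Finsupp.wellFounded_of_add_compatible hlt_irrefl hlt_trans hlt_add hlt_zero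
  have hsupp : ∀ i v, coeff v (f i) ≠ 0 → v = ini (f i) ∨ lt (ini (f i)) v := fun i v hv =>
    (hlt_total v _).resolve_left ((hini _ (hf i)).2 v hv)
  have hlc : ∀ i, coeff (ini (f i)) (f i) ≠ 0 := fun i => (hini _ (hf i)).1
  have hP : Pairwise (Disjoint on APart) := fun i j hij =>
    Set.disjoint_iff_inter_eq_empty.2 (hdisj i j hij)
  have hPα : ∀ i, ∀ d ∈ APart i, ini (f i) ≤ d := fun i d hd => by
    obtain ⟨e, -, rfl⟩ := hsub i hd
    exact le_self_add
  obtain ⟨a, b, h⟩ := exists_isEchelonDivision hwf hlt_irrefl hlt_add hsupp hlc hP hPα F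
  refine ⟨(a, b), h, fun p hp => ?_⟩
  obtain ⟨ha, hb⟩ := IsEchelonDivision.unique hwf hlt_add hsupp hlc hP hp h
  exact Prod.ext ha hb

theorem echelon_division_unique
    {K : Type*} [Field K] {n k : ℕ}
    -- a monomial order on ℕ^n : a strict linear order compatible with addition, 0 least
    (lt : (Fin n →₀ ℕ) → (Fin n →₀ ℕ) → Prop)
    (hlt_total : ∀ a b, lt a b ∨ a = b ∨ lt b a)
    (hlt_irrefl : ∀ a, ¬ lt a a)
    (hlt_trans : ∀ a b c, lt a b → lt b c → lt a c)
    (hlt_add : ∀ a b c, lt a b → lt (c + a) (c + b))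
    (hlt_zero : ∀ a : Fin n →₀ ℕ, a ≠ 0 → lt 0 a)
    -- the initial-exponent function associated to the monomial order
    (ini : MvPowerSeries (Fin n) K → (Fin n →₀ ℕ))
    (hini : ∀ F : MvPowerSeries (Fin n) K, F ≠ 0 →
      MvPowerSeries.coeff (ini F) F ≠ 0 ∧
        ∀ d, MvPowerSeries.coeff d F ≠ 0 → ¬ lt d (ini F))
    -- the divisors with their assigned scopes
    (f : Fin k → MvPowerSeries (Fin n) K) (hf : ∀ i, f i ≠ 0)
    (s : Fin k → ℕ) (hs : ∀ i, s i ≤ n)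
    -- the set A = ⋃ᵢ (αᵢ + (ℕ^{sᵢ} × 0^{n-sᵢ}))
    (A : Set (Fin n →₀ ℕ))
    (hA : A = ⋃ i : Fin k,
      {d | ∃ e : Fin n →₀ ℕ, (∀ j : Fin n, s i ≤ (j : ℕ) → e j = 0) ∧ d = ini (f i) + e})
    -- a partition A = A₁ ⊔ ⋯ ⊔ A_k with Aᵢ ⊆ αᵢ + (ℕ^{sᵢ} × 0^{n-sᵢ})
    (APart : Fin k → Set (Fin n →₀ ℕ))
    (hcover : A = ⋃ i : Fin k, APart i)
    (hdisj : ∀ i j : Fin k, i ≠ j → APart i ∩ APart j = ∅)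
    (hsub : ∀ i : Fin k, APart i ⊆
      {d | ∃ e : Fin n →₀ ℕ, (∀ j : Fin n, s i ≤ (j : ℕ) → e j = 0) ∧ d = ini (f i) + e})
    (F : MvPowerSeries (Fin n) K) :
    ∃! p : (Fin k → MvPowerSeries (Fin n) K) × MvPowerSeries (Fin n) K,
      -- the division identity
      F = (∑ i, p.1 i * f i) + p.2 ∧
      -- the support of b is disjoint from A
      (∀ d, MvPowerSeries.coeff d p.2 ≠ 0 → d ∉ A) ∧
      -- supp(aᵢ) + αᵢ ⊆ Aᵢ for every i
      (∀ i, ∀ d, MvPowerSeries.coeff d (p.1 i) ≠ 0 → d + ini (f i) ∈ APart i) :=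
  echelon_division_unique_general lt hlt_total hlt_irrefl hlt_trans hlt_add hlt_zero ini hini f hf s
    A APart hcover hdisj hsub F
end

section
/- If a K-linear endomorphism strictly raises initial exponents then adding the identity gives an automorphism. Let K be a field and < a monomial order on ℕ^n satisfying condition (#) (every element of ℕ^n has only finitely many <-predecessors). Let T : K[[x_1,…,x_n]] → K[[x_1,…,x_n]] be a K-linear map such that for every nonzero h, either T(h) = 0 or in(T(h)) > in(h). Then Id + T is a K-linear bijection of K[[x_1,…,x_n]] onto itself, with inverse given by the coefficientwise-convergent series Σ_{i≥0} (−T)^i. -/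
/-!
Counting predecessors turns the monomial order into an `ℕ`-valued rank, by condition (#). The
series whose coefficients vanish in all exponents of rank `< k` form a decreasing, separated and
complete filtration `V k` of `K[[x]]`, and a map raising initial exponents sends `V k` into
`V (k + 1)`. Hence `(-T)^i F ∈ V i`, the partial sums of `∑ (-T)^i F` converge coefficientwise to
some `U F`, and the telescoping identities `(1 + T) ∑_{i<m} (-T)^i = 1 - (-T)^m =
(∑_{i<m} (-T)^i) (1 + T)` show in the limit that `U` is a two-sided inverse of `1 + T`.
-/

open MvPowerSeries Finset

section FilteredModule

variable {R M : Type*} [Ring R] [AddCommGroup M] [Module R M]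

theorem geom_sum_neg_apply_add_apply (T : Module.End R M) (m : ℕ) (x : M) :
    (∑ i ∈ range m, (-T) ^ i) x + T ((∑ i ∈ range m, (-T) ^ i) x) = x - ((-T) ^ m) x := by
  have h := LinearMap.congr_fun (mul_neg_geom_sum (-T) m) x
  rwa [sub_neg_eq_add, add_mul, one_mul, LinearMap.add_apply, Module.End.mul_apply] at h

theorem geom_sum_neg_apply_add (T : Module.End R M) (m : ℕ) (x : M) :
    (∑ i ∈ range m, (-T) ^ i) (x + T x) = x - ((-T) ^ m) x := by
  have h := LinearMap.congr_fun (geom_sum_mul_neg (-T) m) x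
  rwa [sub_neg_eq_add, Module.End.mul_apply, LinearMap.add_apply, Module.End.one_apply] at h

def ShiftsFiltration (V : ℕ → Submodule R M) (T : Module.End R M) : Prop :=
  ∀ k, ∀ x ∈ V k, T x ∈ V (k + 1)

namespace ShiftsFiltration

variable {V : ℕ → Submodule R M} {T : Module.End R M} (hT : ShiftsFiltration V T)
include hT

theorem neg : ShiftsFiltration V (-T) :=
  fun k x hx => neg_mem (hT k x hx)

theorem pow_apply_mem (hV0 : V 0 = ⊤) (m : ℕ) (x : M) : (T ^ m) x ∈ V m := by
  induction m with
  | zero => simp [hV0]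
  | succ m ih =>
    rw [pow_succ', Module.End.mul_apply]
    exact hT m _ ih

theorem geom_sum_neg_apply_sub_mem (hV : Antitone V) (hV0 : V 0 = ⊤) {k m : ℕ} (hkm : k ≤ m)
    (x : M) : (∑ i ∈ range m, (-T) ^ i) x - (∑ i ∈ range k, (-T) ^ i) x ∈ V k := by
  rw [← LinearMap.sub_apply, ← sum_Ico_eq_sub _ hkm, LinearMap.sum_apply]
  exact Submodule.sum_mem _ fun i hi => hV (mem_Ico.1 hi).1 (hT.neg.pow_apply_mem hV0 i x)

variable (hV0 : V 0 = ⊤) (hsep : ∀ y, (∀ m, y ∈ V m) → y = 0)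
include hV0 hsep

theorem add_apply_eq_of_sub_geom_sum_mem (hV : Antitone V) {u x : M}
    (hu : ∀ m, u - (∑ i ∈ range m, (-T) ^ i) x ∈ V m) : u + T u = x := by
  rw [← sub_eq_zero]
  refine hsep _ fun m => ?_
  have hv : u + T u - x = (u - (∑ i ∈ range m, (-T) ^ i) x) +
      T (u - (∑ i ∈ range m, (-T) ^ i) x) - ((-T) ^ m) x := by
    rw [map_sub]
    linear_combination (norm := module) geom_sum_neg_apply_add_apply T m x
  rw [hv]
  exact sub_mem (add_mem (hu m) (hV m.le_succ (hT m _ (hu m)))) (hT.neg.pow_apply_mem hV0 m x)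

theorem eq_of_sub_geom_sum_apply_add_mem {u x : M}
    (hu : ∀ m, u - (∑ i ∈ range m, (-T) ^ i) (x + T x) ∈ V m) : u = x := by
  rw [← sub_eq_zero]
  refine hsep _ fun m => ?_
  have hv : u - x = u - (∑ i ∈ range m, (-T) ^ i) (x + T x) - ((-T) ^ m) x := by
    rw [geom_sum_neg_apply_add]
    abel
  rw [hv]
  exact sub_mem (hu m) (hT.neg.pow_apply_mem hV0 m x)

end ShiftsFiltration

end FilteredModule

section PredCard

variable {α : Type*}

noncomputable def predCard (r : α → α → Prop) (a : α) : ℕ :=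
  {b | r b a}.ncard

theorem predCard_lt_predCard {r : α → α → Prop} [IsStrictOrder α r] {a b : α}
    (hb : {c | r c b}.Finite) (hab : r a b) : predCard r a < predCard r b :=
  Set.ncard_lt_ncard ⟨fun _ hc => trans_of r hc hab, fun h => irrefl_of r a (h hab)⟩ hb

end PredCard

section RankFiltration

variable {σ R : Type*} [Ring R] (lt : (σ →₀ ℕ) → (σ →₀ ℕ) → Prop)

def rankFiltration (k : ℕ) : Submodule R (MvPowerSeries σ R) :=
  ⨅ (d) (_ : predCard lt d < k), LinearMap.ker (coeff d)

variable {lt}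

theorem mem_rankFiltration {k : ℕ} {F : MvPowerSeries σ R} :
    F ∈ rankFiltration lt k ↔ ∀ d, predCard lt d < k → coeff d F = 0 := by
  simp [rankFiltration, Submodule.mem_iInf]

variable (lt)

theorem rankFiltration_zero : rankFiltration lt 0 = (⊤ : Submodule R (MvPowerSeries σ R)) :=
  eq_top_iff.2 fun _ _ => mem_rankFiltration.2 fun _ h => absurd h (Nat.not_lt_zero _)

theorem rankFiltration_antitone : Antitone (rankFiltration (σ := σ) (R := R) lt) :=
  fun _ _ hkm _ hF => mem_rankFiltration.2 fun d hd => mem_rankFiltration.1 hF d (hd.trans_le hkm)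

theorem eq_zero_of_forall_mem_rankFiltration {F : MvPowerSeries σ R}
    (h : ∀ k, F ∈ rankFiltration lt k) : F = 0 :=
  ext fun d => mem_rankFiltration.1 (h (predCard lt d + 1)) d (Nat.lt_succ_self _)

variable {lt}

theorem coeff_eq_of_sub_mem_rankFiltration {k : ℕ} {d : σ →₀ ℕ} {F G : MvPowerSeries σ R}
    (h : F - G ∈ rankFiltration lt k) (hd : predCard lt d < k) : coeff d F = coeff d G := by
  rw [← sub_eq_zero, ← map_sub]
  exact mem_rankFiltration.1 h d hd

variable (lt)

/-- The coefficientwise limit of a sequence that is Cauchy for `rankFiltration`: coefficient `d`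
is read off at stage `predCard lt d + 1`, after which it no longer changes. -/
noncomputable def rankLimit {N : Type*} [AddCommGroup N] [Module R N]
    (P : ℕ → N →ₗ[R] MvPowerSeries σ R) : N →ₗ[R] MvPowerSeries σ R :=
  LinearMap.pi fun d => coeff d ∘ₗ P (predCard lt d + 1)

theorem rankLimit_apply_sub_mem {N : Type*} [AddCommGroup N] [Module R N]
    {P : ℕ → N →ₗ[R] MvPowerSeries σ R}
    (hP : ∀ k m, k ≤ m → ∀ x, P m x - P k x ∈ rankFiltration lt k) (m : ℕ) (x : N) :
    rankLimit lt P x - P m x ∈ rankFiltration lt m := by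
  refine mem_rankFiltration.2 fun d hd => ?_
  rw [map_sub, sub_eq_zero]
  exact (coeff_eq_of_sub_mem_rankFiltration (hP _ m hd x) (Nat.lt_succ_self _)).symm

def IsInitialExponent (ini : MvPowerSeries σ R → σ →₀ ℕ) : Prop :=
  ∀ F, F ≠ 0 → coeff (ini F) F ≠ 0 ∧ ∀ d, coeff d F ≠ 0 → ¬ lt d (ini F)

variable {lt} [IsStrictTotalOrder _ lt] (hfin : ∀ a, {b | lt b a}.Finite)
  {ini : MvPowerSeries σ R → σ →₀ ℕ} (hini : IsInitialExponent lt ini)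
include hfin hini

theorem predCard_ini_le {d : σ →₀ ℕ} {F : MvPowerSeries σ R} (hd : coeff d F ≠ 0) :
    predCard lt (ini F) ≤ predCard lt d := by
  have hF : F ≠ 0 := by
    rintro rfl
    exact hd (map_zero _)
  rcases trichotomous_of lt (ini F) d with h | h | h
  · exact (predCard_lt_predCard (hfin d) h).le
  · rw [h]
  · exact absurd h ((hini F hF).2 d hd)

theorem mem_rankFiltration_iff_le_predCard_ini {k : ℕ} {F : MvPowerSeries σ R} (hF : F ≠ 0) :
    F ∈ rankFiltration lt k ↔ k ≤ predCard lt (ini F) := by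
  rw [mem_rankFiltration]
  constructor
  · intro h
    by_contra! hk
    exact (hini F hF).1 (h _ hk)
  · intro hk d hd
    by_contra hne
    exact absurd (predCard_ini_le hfin hini hne) (by omega)

theorem shiftsFiltration_of_lt_ini (T : Module.End R (MvPowerSeries σ R))
    (hT : ∀ h, h ≠ 0 → T h = 0 ∨ lt (ini h) (ini (T h))) :
    ShiftsFiltration (rankFiltration lt) T := by
  intro k h hh
  by_cases hTh : T h = 0
  · rw [hTh]
    exact zero_mem _
  have h0 : h ≠ 0 := by
    rintro rfl
    exact hTh (map_zero T)
  rw [mem_rankFiltration_iff_le_predCard_ini hfin hini hTh]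
  exact ((mem_rankFiltration_iff_le_predCard_ini hfin hini h0).1 hh).trans_lt
    (predCard_lt_predCard (hfin _) ((hT h h0).resolve_left hTh))

end RankFiltration

theorem id_add_initial_raising_is_automorphism_general
    {K : Type*} [Field K] {n : ℕ}
    -- a monomial order on ℕ^n : a strict linear order compatible with addition, 0 least
    (lt : (Fin n →₀ ℕ) → (Fin n →₀ ℕ) → Prop)
    (hlt_total : ∀ a b, lt a b ∨ a = b ∨ lt b a)
    (hlt_irrefl : ∀ a, ¬ lt a a)
    (hlt_trans : ∀ a b c, lt a b → lt b c → lt a c)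
    -- condition (#): every element has only finitely many predecessors
    (hfin : ∀ a : Fin n →₀ ℕ, {b : Fin n →₀ ℕ | lt b a}.Finite)
    -- the initial-exponent function associated to the monomial order
    (ini : MvPowerSeries (Fin n) K → (Fin n →₀ ℕ))
    (hini : ∀ F : MvPowerSeries (Fin n) K, F ≠ 0 →
      MvPowerSeries.coeff (R := K) (ini F) F ≠ 0 ∧
        ∀ d, MvPowerSeries.coeff (R := K) d F ≠ 0 → ¬ lt d (ini F))
    -- the K-linear map T strictly raising initial exponents
    (T : Module.End K (MvPowerSeries (Fin n) K))
    (hT : ∀ h : MvPowerSeries (Fin n) K, h ≠ 0 → T h = 0 ∨ lt (ini h) (ini (T h))) :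
    Function.Bijective (fun F : MvPowerSeries (Fin n) K => F + T F) ∧
    ∃ U : Module.End K (MvPowerSeries (Fin n) K),
      (∀ F : MvPowerSeries (Fin n) K, U F + T (U F) = F) ∧
      (∀ F : MvPowerSeries (Fin n) K, U (F + T F) = F) ∧
      -- U is given by the coefficientwise-convergent series Σ_{i≥0} (−T)^i
      (∀ (F : MvPowerSeries (Fin n) K) (d : Fin n →₀ ℕ), ∃ N : ℕ, ∀ m ≥ N,
        MvPowerSeries.coeff (R := K) d (∑ i ∈ Finset.range m, ((-T) ^ i) F) =
          MvPowerSeries.coeff (R := K) d (U F)) := by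
  have : IsStrictTotalOrder _ lt :=
    { trichotomous := fun a b hab hba => ((hlt_total a b).resolve_left hab).resolve_right hba
      irrefl := hlt_irrefl
      trans := hlt_trans }
  have hV := rankFiltration_antitone (σ := Fin n) (R := K) lt
  have hV0 := rankFiltration_zero (σ := Fin n) (R := K) lt
  have hsep : ∀ F : MvPowerSeries (Fin n) K, (∀ m, F ∈ rankFiltration lt m) → F = 0 :=
    fun _ => eq_zero_of_forall_mem_rankFiltration lt
  have hTV := shiftsFiltration_of_lt_ini hfin hini T hT
  set U := rankLimit lt fun m => ∑ i ∈ range m, (-T) ^ i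
  have hU : ∀ F m, U F - (∑ i ∈ range m, (-T) ^ i) F ∈ rankFiltration lt m := fun F =>
    (rankLimit_apply_sub_mem lt (fun _ _ hkm => hTV.geom_sum_neg_apply_sub_mem hV hV0 hkm) · F)
  have right : Function.RightInverse U (fun F => F + T F) := fun F =>
    hTV.add_apply_eq_of_sub_geom_sum_mem hV0 hsep hV (hU F)
  have left : Function.LeftInverse U (fun F => F + T F) := fun F =>
    hTV.eq_of_sub_geom_sum_apply_add_mem hV0 hsep (hU _)
  refine ⟨⟨left.injective, right.surjective⟩, U, right, left,
    fun F d => ⟨predCard lt d + 1, fun m hm => ?_⟩⟩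
  rw [← LinearMap.sum_apply]
  exact (coeff_eq_of_sub_mem_rankFiltration (hU F m) (by omega)).symm

theorem id_add_initial_raising_is_automorphism
    {K : Type*} [Field K] {n : ℕ}
    -- a monomial order on ℕ^n : a strict linear order compatible with addition, 0 least
    (lt : (Fin n →₀ ℕ) → (Fin n →₀ ℕ) → Prop)
    (hlt_total : ∀ a b, lt a b ∨ a = b ∨ lt b a)
    (hlt_irrefl : ∀ a, ¬ lt a a)
    (hlt_trans : ∀ a b c, lt a b → lt b c → lt a c)
    (hlt_add : ∀ a b c, lt a b → lt (c + a) (c + b))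
    (hlt_zero : ∀ a : Fin n →₀ ℕ, a ≠ 0 → lt 0 a)
    -- condition (#): every element has only finitely many predecessors
    (hfin : ∀ a : Fin n →₀ ℕ, {b : Fin n →₀ ℕ | lt b a}.Finite)
    -- the initial-exponent function associated to the monomial order
    (ini : MvPowerSeries (Fin n) K → (Fin n →₀ ℕ))
    (hini : ∀ F : MvPowerSeries (Fin n) K, F ≠ 0 →
      MvPowerSeries.coeff (R := K) (ini F) F ≠ 0 ∧
        ∀ d, MvPowerSeries.coeff (R := K) d F ≠ 0 → ¬ lt d (ini F))
    -- the K-linear map T strictly raising initial exponents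
    (T : Module.End K (MvPowerSeries (Fin n) K))
    (hT : ∀ h : MvPowerSeries (Fin n) K, h ≠ 0 → T h = 0 ∨ lt (ini h) (ini (T h))) :
    Function.Bijective (fun F : MvPowerSeries (Fin n) K => F + T F) ∧
    ∃ U : Module.End K (MvPowerSeries (Fin n) K),
      (∀ F : MvPowerSeries (Fin n) K, U F + T (U F) = F) ∧
      (∀ F : MvPowerSeries (Fin n) K, U (F + T F) = F) ∧
      -- U is given by the coefficientwise-convergent series Σ_{i≥0} (−T)^i
      (∀ (F : MvPowerSeries (Fin n) K) (d : Fin n →₀ ℕ), ∃ N : ℕ, ∀ m ≥ N,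
        MvPowerSeries.coeff (R := K) d (∑ i ∈ Finset.range m, ((-T) ^ i) F) =
          MvPowerSeries.coeff (R := K) d (U F)) :=
  id_add_initial_raising_is_automorphism_general lt hlt_total hlt_irrefl hlt_trans hfin ini hini T
    hT
end

section
/- Directness of the Gabrielov echelon: if a, b, c ∈ ℂ[[x,y,z]] are formal power series with a and b depending only on x,y, and a·1 + b·G + c·H = 0, then a = b = c = 0. -/
/-!
Comparing the coefficients of `x^p y^q z^r` with `r ≥ 1`, to which `a` does not contribute, gives a
recurrence for the coefficients `γ` of `c` driven by the coefficients `β p q` of `x^p y^q` in `b`.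
Solving it along the diagonals `(p, q, r) ↦ (p - 1, q + 1, r + 1)` shows that for every `n`,
`∑_{i+j=n} β i j / (r + j + 1)! = 0` for all `r`, i.e. that `P_n * e^X` is a polynomial, where
`P_n = ∑_{i+j=n} β i j X^i`. Since `e^X` is not a rational function (differentiate and induct on the
degree), `P_n = 0`. Hence `b = 0`, then `c = 0` by the recurrence, and finally `a = 0`.
-/

/- STATEMENT 5: Directness of the Gabrielov echelon. -/

/-- G = x·(e^z − 1) = x·Σ_{m≥1} z^m/m!  in ℂ[[x,y,z]]. -/
noncomputable def G : MvPowerSeries (Fin 3) ℂ :=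
  fun d => if d 0 = 1 ∧ d 1 = 0 ∧ 1 ≤ d 2 then ((Nat.factorial (d 2) : ℂ))⁻¹ else 0

/-- H = y·z − x  in ℂ[[x,y,z]]. -/
noncomputable def H : MvPowerSeries (Fin 3) ℂ :=
  MvPowerSeries.X 1 * MvPowerSeries.X 2 - MvPowerSeries.X 0

/-- A power series in ℂ[[x,y,z]] depends only on x,y if every exponent in its
support has z-exponent 0. -/
def DependsOnXY (F : MvPowerSeries (Fin 3) ℂ) : Prop :=
  ∀ d : Fin 3 →₀ ℕ, MvPowerSeries.coeff d F ≠ 0 → d 2 = 0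

open Finset.HasAntidiagonal

section ExpNotRational

open PowerSeries Polynomial

variable {K : Type*} [Field K] [CharZero K]

theorem PowerSeries.eq_zero_of_coe_mul_exp_eq_coe (P Q : K[X])
    (h : (P : K⟦X⟧) * exp K = Q) : P = 0 := by
  induction hn : P.natDegree using Nat.strong_induction_on generalizing P Q with
  | _ n ih =>
    have hderiv : (Polynomial.derivative P : K⟦X⟧) * exp K = ↑(Polynomial.derivative Q - Q) := by
      have := congrArg (d⁄dX K) h
      rw [Derivation.leibniz, derivative_exp, derivative_coe, derivative_coe, smul_eq_mul,
        smul_eq_mul] at this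
      push_cast
      rw [← this, ← h]
      ring
    have hP' : Polynomial.derivative P = 0 := by
      by_cases h0 : P.natDegree = 0
      · exact derivative_eq_zero.2 h0
      · exact ih _ (hn ▸ natDegree_derivative_lt h0) _ _ hderiv rfl
    rw [eq_C_of_derivative_eq_zero hP'] at h ⊢
    have := congrArg (PowerSeries.coeff (Q.natDegree + 1)) h
    rw [Polynomial.coe_C, PowerSeries.coeff_C_mul, coeff_exp, Polynomial.coeff_coe,
      Polynomial.coeff_eq_zero_of_natDegree_lt (Nat.lt_succ_self _)] at this
    simpa [Nat.factorial_ne_zero] using this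

theorem eq_zero_of_sum_antidiagonal_div_factorial (β : ℕ → ℕ → K) (n : ℕ)
    (h : ∀ r, ∑ x ∈ antidiagonal n, β x.1 x.2 / ((r + x.2 + 1).factorial : K) = 0) :
    ∀ x ∈ antidiagonal n, β x.1 x.2 = 0 := by
  set P : K[X] := ∑ x ∈ antidiagonal n, Polynomial.C (β x.1 x.2) * Polynomial.X ^ x.1 with hPdef
  have hcoeff : ∀ N, n < N → PowerSeries.coeff N ((P : K⟦X⟧) * exp K) = 0 := by
    intro N hN
    obtain ⟨r, rfl⟩ := Nat.exists_eq_add_of_lt hN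
    have hP : (P : K⟦X⟧) =
        ∑ x ∈ antidiagonal n, PowerSeries.C (β x.1 x.2) * PowerSeries.X ^ x.1 := by
      rw [hPdef, ← coeToPowerSeries.ringHom_apply, map_sum]
      simp only [coeToPowerSeries.ringHom_apply, Polynomial.coe_mul, Polynomial.coe_C,
        Polynomial.coe_pow, Polynomial.coe_X]
    rw [← h r, hP, Finset.sum_mul, map_sum]
    refine Finset.sum_congr rfl fun x hx => ?_
    rw [mem_antidiagonal] at hx
    rw [mul_assoc, PowerSeries.coeff_C_mul, PowerSeries.coeff_X_pow_mul', if_pos (by omega),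
      show n + r + 1 - x.1 = r + x.2 + 1 by omega, coeff_exp]
    simp [div_eq_mul_inv]
  have hP : P = 0 := by
    refine eq_zero_of_coe_mul_exp_eq_coe P (trunc (n + 1) ((P : K⟦X⟧) * exp K)) ?_
    ext N
    rw [Polynomial.coeff_coe, coeff_trunc]
    split_ifs with hN
    · rfl
    · exact hcoeff N (by omega)
  intro x hx
  have := congrArg (Polynomial.coeff · x.1) hP
  simp only [P, Polynomial.finsetSum_coeff, Polynomial.coeff_C_mul_X_pow] at this
  rw [mem_antidiagonal] at hx
  rw [Finset.sum_eq_single x] at this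
  · simpa using this
  · intro y hy hyx
    rw [mem_antidiagonal] at hy
    exact if_neg fun h => hyx (Prod.ext h.symm (by omega))
  · exact fun h => absurd (mem_antidiagonal.2 hx) h

end ExpNotRational

section Recurrence

/- `β p q` and `γ p q r` stand for the coefficients of `x^p y^q` in `b` and of `x^p y^q z^r` in `c`;
the hypotheses are the coefficients of `b * G + c * H` at `y^(q+1) z^(r+1)`, `x^(p+1) z^(r+1)`
and `x^(p+1) y^(q+1) z^(r+1)`. -/

variable {K : Type*} [Field K] {β : ℕ → ℕ → K} {γ : ℕ → ℕ → ℕ → K}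

lemma eq_neg_sum_of_recurrence (h0 : ∀ q r, γ 0 q r = 0)
    (hs : ∀ p q r, β p (q + 1) / ((r + 1).factorial : K) + γ (p + 1) q r = γ p (q + 1) (r + 1))
    (p q r : ℕ) :
    γ (p + 1) q r =
      -∑ x ∈ antidiagonal p, β x.1 (q + x.2 + 1) / ((r + x.2 + 1).factorial : K) := by
  induction p generalizing q r with
  | zero =>
    simp only [Finset.Nat.antidiagonal_zero, Finset.sum_singleton]
    linear_combination hs 0 q r + h0 (q + 1) (r + 1)
  | succ p ih =>
    have hshift : ∀ x ∈ antidiagonal p,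
        β x.1 (q + (x.2 + 1) + 1) / ((r + (x.2 + 1) + 1).factorial : K) =
          β x.1 (q + 1 + x.2 + 1) / ((r + 1 + x.2 + 1).factorial : K) := fun x _ => by
      rw [← add_assoc q, ← add_assoc r, add_right_comm q, add_right_comm r]
    rw [Finset.Nat.sum_antidiagonal_succ', Finset.sum_congr rfl hshift]
    linear_combination hs (p + 1) q r + ih (q + 1) (r + 1)

lemma sum_antidiagonal_eq_zero_of_recurrence (h0 : ∀ q r, γ 0 q r = 0)
    (hs0 : ∀ p r, β p 0 / ((r + 1).factorial : K) = γ p 0 (r + 1))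
    (hs : ∀ p q r, β p (q + 1) / ((r + 1).factorial : K) + γ (p + 1) q r = γ p (q + 1) (r + 1))
    (n r : ℕ) :
    ∑ x ∈ antidiagonal n, β x.1 x.2 / ((r + x.2 + 1).factorial : K) = 0 := by
  cases n with
  | zero => simpa [h0] using hs0 0 r
  | succ p =>
    have hshift : ∀ x ∈ antidiagonal p,
        β x.1 (x.2 + 1) / ((r + (x.2 + 1) + 1).factorial : K) =
          β x.1 (0 + x.2 + 1) / ((r + 1 + x.2 + 1).factorial : K) := fun x _ => by
      rw [zero_add, ← add_assoc r, add_right_comm r]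
    rw [Finset.Nat.sum_antidiagonal_succ', Finset.sum_congr rfl hshift]
    linear_combination hs0 (p + 1) r + eq_neg_sum_of_recurrence h0 hs p 0 (r + 1)

lemma eq_zero_of_recurrence [CharZero K] (h0 : ∀ q r, γ 0 q r = 0)
    (hs0 : ∀ p r, β p 0 / ((r + 1).factorial : K) = γ p 0 (r + 1))
    (hs : ∀ p q r, β p (q + 1) / ((r + 1).factorial : K) + γ (p + 1) q r = γ p (q + 1) (r + 1)) :
    (∀ p q, β p q = 0) ∧ ∀ p q r, γ p q r = 0 := by
  have hβ (p q : ℕ) : β p q = 0 :=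
    eq_zero_of_sum_antidiagonal_div_factorial β (p + q)
      (sum_antidiagonal_eq_zero_of_recurrence h0 hs0 hs (p + q)) (p, q) (mem_antidiagonal.2 rfl)
  refine ⟨hβ, fun p q r => ?_⟩
  cases p with
  | zero => exact h0 q r
  | succ p => simp [eq_neg_sum_of_recurrence h0 hs, hβ]

end Recurrence

open MvPowerSeries

noncomputable def xyzExp (p q r : ℕ) : Fin 3 →₀ ℕ :=
  Finsupp.single 0 p + Finsupp.single 1 q + Finsupp.single 2 r

@[simp] lemma xyzExp_apply_zero (p q r : ℕ) : xyzExp p q r 0 = p := by simp [xyzExp]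
@[simp] lemma xyzExp_apply_one (p q r : ℕ) : xyzExp p q r 1 = q := by simp [xyzExp]
@[simp] lemma xyzExp_apply_two (p q r : ℕ) : xyzExp p q r 2 = r := by simp [xyzExp]

lemma finsupp_fin_three_ext_iff {d e : Fin 3 →₀ ℕ} :
    d = e ↔ d 0 = e 0 ∧ d 1 = e 1 ∧ d 2 = e 2 := by
  refine ⟨by rintro rfl; simp, fun ⟨h0, h1, h2⟩ => Finsupp.ext fun i => ?_⟩
  fin_cases i <;> assumption

lemma eq_xyzExp (d : Fin 3 →₀ ℕ) : d = xyzExp (d 0) (d 1) (d 2) := by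
  simp [finsupp_fin_three_ext_iff]

lemma xyzExp_le_xyzExp {p q r p' q' r' : ℕ} :
    xyzExp p' q' r' ≤ xyzExp p q r ↔ p' ≤ p ∧ q' ≤ q ∧ r' ≤ r := by
  simp [Finsupp.le_def, Fin.forall_fin_succ]

lemma xyzExp_sub_xyzExp (p q r p' q' r' : ℕ) :
    xyzExp p q r - xyzExp p' q' r' = xyzExp (p - p') (q - q') (r - r') := by
  simp [finsupp_fin_three_ext_iff]

lemma H_eq_monomial_sub_monomial :
    H = monomial (xyzExp 0 1 1) 1 - monomial (xyzExp 1 0 0) 1 := by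
  simp [H, X_def, monomial_mul_monomial, xyzExp]

lemma coeff_xyzExp_mul_H (c : MvPowerSeries (Fin 3) ℂ) (p q r : ℕ) :
    coeff (xyzExp p q r) (c * H) =
      (if 0 < q ∧ 0 < r then coeff (xyzExp p (q - 1) (r - 1)) c else 0) -
        if 0 < p then coeff (xyzExp (p - 1) q r) c else 0 := by
  simp [H_eq_monomial_sub_monomial, mul_sub, coeff_mul_monomial, xyzExp_le_xyzExp,
    xyzExp_sub_xyzExp, Nat.one_le_iff_ne_zero, Nat.pos_iff_ne_zero]

lemma coeff_G (d : Fin 3 →₀ ℕ) :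
    coeff d G = if d 0 = 1 ∧ d 1 = 0 ∧ 1 ≤ d 2 then ((d 2).factorial : ℂ)⁻¹ else 0 := rfl

lemma coeff_xyzExp_mul_G {b : MvPowerSeries (Fin 3) ℂ} (hb : DependsOnXY b) (p q r : ℕ) :
    coeff (xyzExp p q r) (b * G) =
      if 0 < p ∧ 0 < r then coeff (xyzExp (p - 1) q 0) b / (r.factorial : ℂ) else 0 := by
  classical
  have hsupport : ∀ x ∈ antidiagonal (xyzExp p q r), coeff x.1 b * coeff x.2 G ≠ 0 →
      x = (xyzExp (p - 1) q 0, xyzExp 1 0 r) ∧ 0 < p ∧ 0 < r := by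
    rintro ⟨u, v⟩ huv hne
    dsimp only at hne
    have hu := hb u (left_ne_zero_of_mul hne)
    have hv := right_ne_zero_of_mul hne
    rw [coeff_G, ne_eq, ite_eq_right_iff, Classical.not_imp] at hv
    rw [mem_antidiagonal, finsupp_fin_three_ext_iff] at huv
    simp only [Finsupp.add_apply, xyzExp_apply_zero, xyzExp_apply_one, xyzExp_apply_two] at huv
    simp only [Prod.mk.injEq, finsupp_fin_three_ext_iff, xyzExp_apply_zero, xyzExp_apply_one,
      xyzExp_apply_two]
    omega
  rw [coeff_mul]
  split_ifs with hpr
  · have hmem : (xyzExp (p - 1) q 0, xyzExp 1 0 r) ∈ antidiagonal (xyzExp p q r) := by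
      simp only [mem_antidiagonal, finsupp_fin_three_ext_iff, Finsupp.add_apply,
        xyzExp_apply_zero, xyzExp_apply_one, xyzExp_apply_two]
      omega
    rw [Finset.sum_eq_single_of_mem _ hmem
      fun x hx hne => by_contra fun h => hne (hsupport x hx h).1, coeff_G]
    simp [hpr.2.ne', Nat.one_le_iff_ne_zero, div_eq_mul_inv]
  · exact Finset.sum_eq_zero fun x hx => by_contra fun h => hpr (hsupport x hx h).2

lemma coeff_xyzExp_mul_G_add_mul_H_eq_zero {a b c : MvPowerSeries (Fin 3) ℂ}
    (ha : DependsOnXY a) (h : a * 1 + b * G + c * H = 0) (p q r : ℕ) :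
    coeff (xyzExp p q (r + 1)) (b * G) + coeff (xyzExp p q (r + 1)) (c * H) = 0 := by
  have ha0 : coeff (xyzExp p q (r + 1)) a = 0 := by
    by_contra hne
    simpa using ha _ hne
  simpa [ha0, add_assoc] using congrArg (coeff (xyzExp p q (r + 1))) h

lemma eq_zero_of_coeff_xyzExp_zero {b : MvPowerSeries (Fin 3) ℂ} (hb : DependsOnXY b)
    (h : ∀ p q, coeff (xyzExp p q 0) b = 0) : b = 0 := by
  ext d
  rw [map_zero]
  by_contra hne
  have hd := hb d hne
  rw [eq_xyzExp d, hd] at hne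
  exact hne (h _ _)

theorem gabrielov_echelon_direct
    (a b c : MvPowerSeries (Fin 3) ℂ)
    (ha : DependsOnXY a) (hb : DependsOnXY b)
    (h : a * 1 + b * G + c * H = 0) :
    a = 0 ∧ b = 0 ∧ c = 0 := by
  have hz := coeff_xyzExp_mul_G_add_mul_H_eq_zero ha h
  obtain ⟨hβ, hγ⟩ := eq_zero_of_recurrence (β := fun p q => coeff (xyzExp p q 0) b)
    (γ := fun p q r => coeff (xyzExp p q r) c)
    (fun q r => by simpa [coeff_xyzExp_mul_G hb, coeff_xyzExp_mul_H] using hz 0 (q + 1) r)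
    (fun p r => by
      simpa [coeff_xyzExp_mul_G hb, coeff_xyzExp_mul_H, add_neg_eq_zero] using hz (p + 1) 0 r)
    (fun p q r => by
      simpa [coeff_xyzExp_mul_G hb, coeff_xyzExp_mul_H, ← add_sub_assoc, sub_eq_zero]
        using hz (p + 1) (q + 1) r)
  have hb0 : b = 0 := eq_zero_of_coeff_xyzExp_zero hb hβ
  have hc0 : c = 0 := by
    ext d
    rw [eq_xyzExp d]
    exact hγ _ _ _
  exact ⟨by simpa [hb0, hc0] using h, hb0, hc0⟩
end

section
/- The g_2 identity: in ℂ[[x,y,z]] one has x²·1 − (y − x/2)·G + (x·Σ_{m≥0} z^m/(m+1)!)·H = (1/2)·x²·Σ_{m≥2} ((m−1)/(m+1)!)·z^m. -/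
/-- x·Σ_{m≥0} z^m/(m+1)!  in ℂ[[x,y,z]]. -/
noncomputable def P : MvPowerSeries (Fin 3) ℂ :=
  fun d => if d 0 = 1 ∧ d 1 = 0 then ((Nat.factorial (d 2 + 1) : ℂ))⁻¹ else 0

/-- (1/2)·x²·Σ_{m≥2} ((m−1)/(m+1)!)·z^m  in ℂ[[x,y,z]]. -/
noncomputable def g2 : MvPowerSeries (Fin 3) ℂ :=
  fun d => if d 0 = 2 ∧ d 1 = 0 ∧ 2 ≤ d 2
    then (2 : ℂ)⁻¹ * (((d 2 - 1 : ℕ) : ℂ) / ((Nat.factorial (d 2 + 1) : ℂ))) else 0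

/-!
`G`, `P` and `g2` are `x` or `x²` times a series in `z` alone: with `q = (e^z - 1)/z`,
`G = x·z·q`, `P = x·q` and `g2 = x²·r`. In the left-hand side the `y`-terms `∓ x·y·z·q` cancel,
leaving `x²·(1 + (z/2 - 1)·q)`, so the identity reduces to `1 + (z/2 - 1)·q = r` in `ℂ⟦z⟧`,
whose `z^m`-coefficient is `1/(2·m!) - 1/(m+1)! = (m-1)/(2·(m+1)!)` for `m ≥ 1`.
-/

open Nat

namespace MvPowerSeries

theorem coeff_X_pow_mul {σ R : Type*} [DecidableEq σ] [CommSemiring R] (i : σ) (k : ℕ)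
    (F : MvPowerSeries σ R) (d : σ →₀ ℕ) :
    coeff d (X i ^ k * F) = if k ≤ d i then coeff (d - Finsupp.single i k) F else 0 := by
  simp only [X_pow_eq, coeff_monomial_mul, Finsupp.single_le_iff, one_mul]

theorem coeff_rename_punit {σ R : Type*} [DecidableEq σ] [CommSemiring R] (i : σ)
    (f : PowerSeries R) (d : σ →₀ ℕ) :
    coeff d (rename (Function.Embedding.punit i) f) =
      if d = Finsupp.single i (d i) then PowerSeries.coeff (d i) f else 0 := by
  have embDomain_punit (n : ℕ) :
      Finsupp.embDomain (Function.Embedding.punit i) (Finsupp.single () n) = Finsupp.single i n :=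
    Finsupp.embDomain_single _ _ _
  split_ifs with hd
  · rw [hd, Finsupp.single_eq_same, ← embDomain_punit, coeff_embDomain_rename]
    rfl
  · refine coeff_rename_eq_zero _ _ fun ⟨x, hx⟩ => hd ?_
    rw [← hx, ← Finsupp.embDomain_eq_mapDomain, Finsupp.unique_single x, embDomain_punit,
      Finsupp.single_eq_same]

end MvPowerSeries

theorem half_inv_factorial_sub_inv_factorial_succ {K : Type*} [Field K] [CharZero K] (m : ℕ) :
    (2 : K)⁻¹ * (m ! : K)⁻¹ - ((m + 1)! : K)⁻¹ = 2⁻¹ * (((m : K) - 1) / (m + 1)!) := by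
  have hm : (m : K) + 1 ≠ 0 := Nat.cast_add_one_ne_zero m
  rw [Nat.factorial_succ]
  push_cast
  field_simp
  ring

noncomputable def shiftedExp : PowerSeries ℂ :=
  PowerSeries.mk fun n => ((n + 1)! : ℂ)⁻¹

noncomputable def g2Profile : PowerSeries ℂ :=
  PowerSeries.mk fun n => if 2 ≤ n then (2 : ℂ)⁻¹ * (((n - 1 : ℕ) : ℂ) / ((n + 1)! : ℂ)) else 0

theorem one_add_half_X_sub_one_mul_shiftedExp :
    1 + ((2 : ℂ)⁻¹ • PowerSeries.X - 1) * shiftedExp = g2Profile := by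
  ext (_ | _ | n)
  · simp [shiftedExp, g2Profile]
  · simp [shiftedExp, g2Profile, sub_mul, PowerSeries.coeff_succ_X_mul]
  · have key := half_inv_factorial_sub_inv_factorial_succ (K := ℂ) (n + 2)
    push_cast at key
    simp only [shiftedExp, g2Profile, sub_mul, Algebra.smul_mul_assoc, one_mul, map_add,
      PowerSeries.coeff_one, Nat.add_eq_zero_iff, one_ne_zero, and_false, and_self, ↓reduceIte,
      map_sub, map_smul, PowerSeries.coeff_succ_X_mul, PowerSeries.coeff_mk, smul_eq_mul, zero_add,
      le_add_iff_nonneg_left, _root_.zero_le, add_tsub_cancel_right, cast_add, cast_one]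
    linear_combination key

open MvPowerSeries

noncomputable def zSeries : PowerSeries ℂ →ₐ[ℂ] MvPowerSeries (Fin 3) ℂ :=
  rename (Function.Embedding.punit 2)

theorem zSeries_X : zSeries PowerSeries.X = X 2 :=
  rename_X _ ()

theorem coeff_X_zero_pow_mul_zSeries (k : ℕ) (f : PowerSeries ℂ) (d : Fin 3 →₀ ℕ) :
    coeff d (X 0 ^ k * zSeries f) =
      if d 0 = k ∧ d 1 = 0 then PowerSeries.coeff (d 2) f else 0 := by
  have support_iff : (k ≤ d 0 ∧ d - Finsupp.single 0 k = Finsupp.single 2 (d 2)) ↔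
      (d 0 = k ∧ d 1 = 0) := by
    simp only [Finsupp.ext_iff, Finsupp.coe_tsub, Pi.sub_apply, Finsupp.single_apply,
      Fin.forall_fin_succ, ↓reduceIte, Fin.reduceEq, Fin.succ_zero_eq_one, zero_ne_one, tsub_zero,
      Fin.succ_one_eq_two, IsEmpty.forall_iff, and_self, and_true]
    omega
  rw [coeff_X_pow_mul, zSeries, coeff_rename_punit, ← ite_and]
  simpa using if_congr support_iff rfl rfl

theorem G_eq : G = X 0 * zSeries (PowerSeries.X * shiftedExp) := by
  ext d
  rw [← pow_one (X 0), coeff_X_zero_pow_mul_zSeries]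
  rcases h : d 2 with _ | n
  · simp [G, coeff_apply, h]
  · simp [G, coeff_apply, h, PowerSeries.coeff_succ_X_mul, shiftedExp]

theorem P_eq : P = X 0 * zSeries shiftedExp := by
  ext d
  rw [← pow_one (X 0), coeff_X_zero_pow_mul_zSeries]
  simp [P, shiftedExp, coeff_apply]

theorem g2_eq : g2 = X 0 ^ 2 * zSeries g2Profile := by
  ext d
  rw [coeff_X_zero_pow_mul_zSeries]
  simp [g2, g2Profile, coeff_apply, ite_and]

theorem g2_identity :
    MvPowerSeries.X 0 ^ 2 * 1
      - (MvPowerSeries.X 1 - (2 : ℂ)⁻¹ • MvPowerSeries.X 0) * G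
      + P * H = g2 := by
  rw [G_eq, P_eq, g2_eq, H, ← one_add_half_X_sub_one_mul_shiftedExp]
  simp only [Algebra.smul_def, map_add, map_mul, map_sub, map_one, AlgHom.commutes, zSeries_X]
  ring
end

section
/- The general g_k identity: for every k ≥ 1 there exists a unique c_k ∈ ℂ[[x,y,z]] such that a_k·1 + b_k·G + c_k·H = g_k, where g_k := x^k·Σ_{i≥k} q_{i,k}·z^i. -/
/-- The rising factorial (1/2)^{\overline{k−1}} = (1/2)(1/2+1)⋯(1/2+k−2). -/
def rise (k : ℕ) : ℚ := ∏ j ∈ Finset.range (k - 1), ((1 : ℚ) / 2 + j)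

/-- q_{i,k} = (i−1)! / (4^{k−1}·(i−k)!·(i+k−1)!·(1/2)^{\overline{k−1}}). -/
def q (i k : ℕ) : ℚ :=
  (Nat.factorial (i - 1) : ℚ) /
    (4 ^ (k - 1) * (Nat.factorial (i - k) : ℚ) * (Nat.factorial (i + k - 1) : ℚ) * rise k)

/-- The polynomials a_k : a₁ = 0, a₂ = x²,
    a_k = −y·a_{k−1} + (4(2k−3)(2k−5))⁻¹·x²·a_{k−2} for k ≥ 3. -/
noncomputable def aP : ℕ → MvPowerSeries (Fin 3) ℂ
  | 0 => 0
  | 1 => 0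
  | 2 => MvPowerSeries.X 0 ^ 2
  | (k + 3) => -(MvPowerSeries.X 1) * aP (k + 2)
      + (4 * (2 * (k : ℂ) + 3) * (2 * (k : ℂ) + 1))⁻¹ •
        (MvPowerSeries.X 0 ^ 2 * aP (k + 1))

/-- The polynomials b_k : b₁ = 1, b₂ = −y + x/2,
    b_k = −y·b_{k−1} + (4(2k−3)(2k−5))⁻¹·x²·b_{k−2} for k ≥ 3. -/
noncomputable def bP : ℕ → MvPowerSeries (Fin 3) ℂ
  | 0 => 0
  | 1 => 1
  | 2 => -(MvPowerSeries.X 1) + (2 : ℂ)⁻¹ • MvPowerSeries.X 0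
  | (k + 3) => -(MvPowerSeries.X 1) * bP (k + 2)
      + (4 * (2 * (k : ℂ) + 3) * (2 * (k : ℂ) + 1))⁻¹ •
        (MvPowerSeries.X 0 ^ 2 * bP (k + 1))

/-- g_k = x^k·Σ_{i≥k} q_{i,k}·z^i  in ℂ[[x,y,z]]. -/
noncomputable def gSeries (k : ℕ) : MvPowerSeries (Fin 3) ℂ :=
  fun d => if d 0 = k ∧ d 1 = 0 ∧ k ≤ d 2 then ((q (d 2) k : ℚ) : ℂ) else 0

/-! Write `g_k = z s_k` with `s_k = gDivZ k`. Since `y z = H + x`, this gives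
`y g_k = s_k H + x s_k`. The coefficient recurrence
`q_{i,k+3} = -q_{i+1,k+2} + λ_k q_{i,k+1}`, with `λ_k = (4 (2k+3) (2k+1))⁻¹`, says
`g_{k+3} = -x s_{k+2} + λ_k x² g_{k+1}`, hence
`g_{k+3} = -y g_{k+2} + λ_k x² g_{k+1} + s_{k+2} H`: modulo `H` the `g_k` obey the recursion
defining `a_k` and `b_k`. With `g_1 = G` and `g_2 = x² - x s_1 + x G / 2` this produces `c_k`
by induction; it is unique because `ℂ[[x,y,z]]` is a domain and `H ≠ 0`. -/

open scoped Nat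
open MvPowerSeries Finsupp

theorem MvPowerSeries.coeff_X_mul_apply {σ R : Type*} [CommSemiring R] (s : σ)
    (p : MvPowerSeries σ R) (d : σ →₀ ℕ) :
    coeff d (X s * p) = if d s = 0 then 0 else coeff (d - single s 1) p := by
  rw [X_def, coeff_monomial_mul, one_mul]
  by_cases h : d s = 0 <;> simp [h, single_le_iff, Nat.one_le_iff_ne_zero]

section xzSeries

variable {R : Type*}

section CommSemiring

variable [CommSemiring R]

/-- The series `x ^ m * ∑ i, f i * z ^ i`. -/
def xzSeries (m : ℕ) (f : ℕ → R) : MvPowerSeries (Fin 3) R :=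
  fun d => if d 0 = m ∧ d 1 = 0 then f (d 2) else 0

theorem coeff_xzSeries (m : ℕ) (f : ℕ → R) (d : Fin 3 →₀ ℕ) :
    coeff d (xzSeries m f) = if d 0 = m ∧ d 1 = 0 then f (d 2) else 0 := rfl

theorem xzSeries_add (m : ℕ) (f g : ℕ → R) :
    xzSeries m (f + g) = xzSeries m f + xzSeries m g := by
  ext d; simp only [map_add, coeff_xzSeries]; split_ifs <;> simp

theorem xzSeries_smul (m : ℕ) (c : R) (f : ℕ → R) : xzSeries m (c • f) = c • xzSeries m f := by
  ext d; simp only [coeff_smul, coeff_xzSeries]; split_ifs <;> simp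

theorem X_zero_mul_xzSeries (m : ℕ) (f : ℕ → R) : X 0 * xzSeries m f = xzSeries (m + 1) f := by
  ext d
  simp only [coeff_X_mul_apply, coeff_xzSeries, tsub_apply, single_apply, Fin.reduceEq, ↓reduceIte,
    tsub_zero]
  split_ifs <;> grind

theorem X_two_mul_xzSeries (m : ℕ) {f : ℕ → R} (hf : f 0 = 0) :
    X 2 * xzSeries m (fun i => f (i + 1)) = xzSeries m f := by
  ext d
  simp only [coeff_X_mul_apply, coeff_xzSeries, tsub_apply, single_apply, Fin.reduceEq, ↓reduceIte,
    tsub_zero]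
  split_ifs <;> grind

theorem one_eq_xzSeries :
    (1 : MvPowerSeries (Fin 3) R) = xzSeries 0 (fun i => if i = 0 then 1 else 0) := by
  classical
  ext d
  simp only [coeff_one, coeff_xzSeries, Finsupp.ext_iff, Fin.forall_fin_succ, coe_zero,
    Pi.zero_apply, Fin.succ_zero_eq_one, Fin.succ_one_eq_two, IsEmpty.forall_iff, and_true]
  split_ifs <;> grind

end CommSemiring

variable [CommRing R]

theorem xzSeries_neg (m : ℕ) (f : ℕ → R) : xzSeries m (-f) = -xzSeries m f := by
  ext d; simp only [map_neg, coeff_xzSeries]; split_ifs <;> simp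

theorem xzSeries_sub (m : ℕ) (f g : ℕ → R) :
    xzSeries m (f - g) = xzSeries m f - xzSeries m g := by
  ext d; simp only [map_sub, coeff_xzSeries]; split_ifs <;> simp

end xzSeries

theorem rise_pos (k : ℕ) : 0 < rise k := Finset.prod_pos fun _ _ => by positivity

theorem rise_one : rise 1 = 1 := rfl

theorem rise_add_two (n : ℕ) : rise (n + 2) = rise (n + 1) * (1 / 2 + n) := by
  simp [rise, Finset.prod_range_succ]

/-- `q (n + 1 + j) (n + 1)`, written without truncated subtraction. -/
def Q (n j : ℕ) : ℚ :=
  (n + j)! / (4 ^ n * j ! * (2 * n + j + 1)! * rise (n + 1))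

theorem Q_zero (j : ℕ) : Q 0 j = ((j + 1)! : ℚ)⁻¹ := by
  simp [Q, rise_one, Nat.factorial_succ, field]

theorem Q_one (j : ℕ) : Q 1 j = -Q 0 (j + 2) + 2⁻¹ * Q 0 (j + 1) := by
  rw [Q, Q, Q, rise_add_two, rise_one]
  simp only [show 2 * 1 + j + 1 = j + 3 by omega, add_comm 1 j, zero_add, mul_zero,
    Nat.factorial_succ]
  push_cast
  field_simp
  ring

theorem Q_add_one_of_le_one {j : ℕ} (k : ℕ) (hj : j ≤ 1) :
    Q (k + 1) j = (4 * (2 * (k : ℚ) + 3) * (2 * k + 1))⁻¹ * Q k j := by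
  have := (rise_pos (k + 1)).ne'
  interval_cases j <;>
  · simp only [Q, add_zero, Nat.mul_succ, rise_add_two, Nat.factorial_succ]
    push_cast
    field_simp
    ring

theorem Q_add_two (k j : ℕ) :
    Q (k + 2) j = -Q (k + 1) (j + 2) + (4 * (2 * (k : ℚ) + 3) * (2 * k + 1))⁻¹ * Q k (j + 2) := by
  have := (rise_pos (k + 1)).ne'
  rw [Q, Q, Q, show k + 1 + (j + 2) = k + 2 + j + 1 by omega,
    show k + (j + 2) = k + 2 + j by omega, show 2 * (k + 2) + j + 1 = 2 * k + j + 3 + 2 by omega,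
    show 2 * (k + 1) + (j + 2) + 1 = 2 * k + j + 3 + 2 by omega,
    show 2 * k + (j + 2) + 1 = 2 * k + j + 3 by omega, rise_add_two (k + 1)]
  simp only [Nat.factorial_succ, rise_add_two]
  push_cast
  field_simp
  ring

theorem q_add_eq_Q (n j : ℕ) : q (n + 1 + j) (n + 1) = Q n j := by
  rw [q, Q, show n + 1 + j - 1 = n + j by omega, show n + 1 + j - (n + 1) = j by omega,
    show n + 1 + j + (n + 1) - 1 = 2 * n + j + 1 by omega, Nat.add_sub_cancel]

def gCoeff (k i : ℕ) : ℚ := if k ≤ i then q i k else 0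

theorem gCoeff_of_lt {k i : ℕ} (h : i < k) : gCoeff k i = 0 := if_neg (by omega)

theorem gCoeff_eq_Q {n i : ℕ} (j : ℕ) (h : i = n + 1 + j) : gCoeff (n + 1) i = Q n j := by
  rw [gCoeff, if_pos (by omega), h, q_add_eq_Q]

theorem gCoeff_one (i : ℕ) : gCoeff 1 i = if i = 0 then 0 else ((i ! : ℕ) : ℚ)⁻¹ := by
  rcases i with _ | i
  · exact gCoeff_of_lt one_pos
  · rw [gCoeff_eq_Q (n := 0) i (by omega), Q_zero, if_neg i.succ_ne_zero]

theorem gCoeff_two (i : ℕ) :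
    gCoeff 2 i = (if i = 0 then 1 else 0) - gCoeff 1 (i + 1) + 2⁻¹ * gCoeff 1 i := by
  rcases i with _ | _ | j
  · simp [gCoeff_of_lt, gCoeff_one]
  · simp [gCoeff_of_lt, gCoeff_one]
  · rw [gCoeff_eq_Q (n := 1) j (by omega), gCoeff_eq_Q (n := 0) (j + 2) (by omega),
      gCoeff_eq_Q (n := 0) (j + 1) (by omega), Q_one, if_neg (by omega)]
    ring

theorem gCoeff_add_three (k i : ℕ) :
    gCoeff (k + 3) i
      = -gCoeff (k + 2) (i + 1) + (4 * (2 * (k : ℚ) + 3) * (2 * k + 1))⁻¹ * gCoeff (k + 1) i := by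
  rcases lt_or_ge i (k + 1) with hi | hi
  · simp [gCoeff_of_lt, hi, show i < k + 3 by omega, show i + 1 < k + 2 by omega]
  obtain ⟨m, rfl⟩ := exists_add_of_le hi
  rw [gCoeff_eq_Q (n := k + 1) m (by omega), gCoeff_eq_Q (n := k) m rfl]
  rcases le_or_gt m 1 with hm | hm
  · rw [gCoeff_of_lt (by omega), Q_add_one_of_le_one k hm]
    ring
  · obtain ⟨j, rfl⟩ : ∃ j, m = j + 2 := ⟨m - 2, by omega⟩
    rw [gCoeff_eq_Q (n := k + 2) j (by omega), Q_add_two]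

theorem gSeries_eq_xzSeries (k : ℕ) : gSeries k = xzSeries k (fun i => (gCoeff k i : ℂ)) := by
  ext d
  rw [coeff_xzSeries, coeff_apply]
  simp only [gSeries, gCoeff]
  split_ifs <;> simp_all

theorem G_eq_gSeries_one : G = gSeries 1 := by
  ext d
  rw [gSeries_eq_xzSeries, coeff_xzSeries, coeff_apply, G]
  simp only [gCoeff_one]
  split_ifs <;> simp_all

def gDivZ (k : ℕ) : MvPowerSeries (Fin 3) ℂ := xzSeries k (fun i => (gCoeff k (i + 1) : ℂ))

theorem X_two_mul_gDivZ {k : ℕ} (hk : 1 ≤ k) : X 2 * gDivZ k = gSeries k := by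
  rw [gDivZ, X_two_mul_xzSeries k (f := fun i => (gCoeff k i : ℂ)), gSeries_eq_xzSeries]
  simp [gCoeff_of_lt hk]

theorem X_one_mul_gSeries {k : ℕ} (hk : 1 ≤ k) :
    X 1 * gSeries k = gDivZ k * H + X 0 * gDivZ k := by
  rw [← X_two_mul_gDivZ hk, H]
  ring

theorem gSeries_two : gSeries 2 = X 0 ^ 2 - X 0 * gDivZ 1 + (2 : ℂ)⁻¹ • (X 0 * gSeries 1) := by
  rw [sq, ← mul_one (X 0 * X 0), one_eq_xzSeries, mul_assoc, gDivZ, gSeries_eq_xzSeries,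
    gSeries_eq_xzSeries]
  simp only [X_zero_mul_xzSeries, ← xzSeries_smul, ← xzSeries_sub, ← xzSeries_add]
  congr 1
  funext i
  simp only [Pi.add_apply, Pi.sub_apply, Pi.smul_apply, smul_eq_mul]
  push_cast [gCoeff_two i, apply_ite]
  ring

theorem gSeries_add_three (k : ℕ) : gSeries (k + 3) = -(X 0 * gDivZ (k + 2))
    + (4 * (2 * (k : ℂ) + 3) * (2 * k + 1))⁻¹ • (X 0 ^ 2 * gSeries (k + 1)) := by
  rw [sq, mul_assoc (X 0), gDivZ, gSeries_eq_xzSeries, gSeries_eq_xzSeries]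
  simp only [X_zero_mul_xzSeries, ← xzSeries_smul, ← xzSeries_neg, ← xzSeries_add]
  congr 1
  funext i
  simp only [Pi.add_apply, Pi.neg_apply, Pi.smul_apply, smul_eq_mul]
  push_cast [gCoeff_add_three k i]
  ring

noncomputable def cP : ℕ → MvPowerSeries (Fin 3) ℂ
  | 0 => 0
  | 1 => 0
  | 2 => gDivZ 1
  | (k + 3) => -(X 1) * cP (k + 2)
      + (4 * (2 * (k : ℂ) + 3) * (2 * (k : ℂ) + 1))⁻¹ • (X 0 ^ 2 * cP (k + 1)) + gDivZ (k + 2)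

theorem aP_add_bP_mul_G_add_cP_mul_H : ∀ k, 1 ≤ k → aP k * 1 + bP k * G + cP k * H = gSeries k
  | 1, _ => by simp [aP, bP, cP, G_eq_gSeries_one]
  | 2, _ => by
    have hy := X_one_mul_gSeries le_rfl
    rw [← G_eq_gSeries_one] at hy
    rw [aP, bP, cP, gSeries_two, ← G_eq_gSeries_one]
    simp only [smul_eq_C_mul] at *
    linear_combination -hy
  | k + 3, _ => by
    have h1 := aP_add_bP_mul_G_add_cP_mul_H (k + 1) (by omega)
    have h2 := aP_add_bP_mul_G_add_cP_mul_H (k + 2) (by omega)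
    have hy := X_one_mul_gSeries (k := k + 2) (by omega)
    rw [aP, bP, cP, gSeries_add_three]
    simp only [smul_eq_C_mul] at *
    linear_combination (-X 1) * h2 + C (4 * (2 * (k : ℂ) + 3) * (2 * k + 1))⁻¹ * X 0 ^ 2 * h1 - hy

theorem H_ne_zero : H ≠ 0 := by
  intro h
  have := congrArg (coeff (single 0 1)) h
  simp [H, coeff_X_mul_apply, coeff_X] at this

theorem gk_identity (k : ℕ) (hk : 1 ≤ k) :
    ∃! c : MvPowerSeries (Fin 3) ℂ,
      aP k * 1 + bP k * G + c * H = gSeries k := by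
  refine ⟨cP k, aP_add_bP_mul_G_add_cP_mul_H k hk, fun c hc => ?_⟩
  apply mul_right_cancel₀ H_ne_zero
  linear_combination hc - aP_add_bP_mul_G_add_cP_mul_H k hk
end

section
/- Unit coefficient in c_k: for every k ≥ 2, the unique series c_k ∈ ℂ[[x,y,z]] satisfying a_k·1 + b_k·G + c_k·H = x^k·Σ_{i≥k} q_{i,k}·z^i has coefficient of absolute value 1 at the monomial x·y^{k−2} (z-exponent 0). -/
/-
Reduce modulo `z`. Both `G` and `x^k·Σ q_{i,k} z^i` are divisible by `z`, and `H ≡ -x`, so the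
identity becomes `a_k ≡ c_k·x (mod z)`. Hence the coefficient of `x·y^{k-2}` in `c_k` is the
coefficient of `x²·y^{k-2}` in `a_k`, which is `(-1)^(k-2)`: every `a_k` is divisible by `x²`,
so in the recursion the term `x²·a_{k-2}` only contributes to monomials of `x`-degree at least 4.
-/

open MvPowerSeries Finsupp

lemma X_dvd_G : X 2 ∣ G :=
  X_dvd_iff.2 fun m hm => by rw [coeff_apply, G, if_neg (by omega)]

lemma X_dvd_gSeries {k : ℕ} (hk : 1 ≤ k) : X 2 ∣ gSeries k :=
  X_dvd_iff.2 fun m hm => by rw [coeff_apply, gSeries, if_neg (by omega)]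

lemma X_sq_dvd_aP : ∀ m : ℕ, X 0 ^ 2 ∣ aP m
  | 0 => dvd_zero _
  | 1 => dvd_zero _
  | 2 => dvd_rfl
  | k + 3 => by
    rw [aP, smul_eq_C_mul]
    exact dvd_add ((X_sq_dvd_aP (k + 2)).mul_left _) ((dvd_mul_right _ _).mul_left _)

lemma X_pow_four_dvd_aP_add_X_mul_aP (n : ℕ) : X 0 ^ 4 ∣ aP (n + 3) + X 1 * aP (n + 2) := by
  rw [aP, neg_mul, neg_add_cancel_comm, smul_eq_C_mul, show 4 = 2 + 2 from rfl, pow_add]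
  exact (mul_dvd_mul_left _ (X_sq_dvd_aP (n + 1))).mul_left _

lemma coeff_aP : ∀ n : ℕ, coeff (single 0 2 + single 1 n) (aP (n + 2)) = (-1 : ℂ) ^ n
  | 0 => by simp [aP, X_pow_eq]
  | n + 1 => by
    have hcoeff := X_pow_dvd_iff.1 (X_pow_four_dvd_aP_add_X_mul_aP n)
      (single 0 2 + single 1 (n + 1)) (by simp)
    have hshift : single (0 : Fin 3) 2 + single 1 (n + 1)
        = single 1 1 + (single 0 2 + single 1 n) := by
      rw [single_add]; abel
    rw [map_add, add_eq_zero_iff_eq_neg, hshift, X_def, coeff_add_monomial_mul, one_mul,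
      coeff_aP n] at hcoeff
    rw [hshift]
    exact hcoeff.trans (by ring)

theorem ck_unit_coefficient (k : ℕ) (hk : 2 ≤ k)
    (c : MvPowerSeries (Fin 3) ℂ)
    (hc : aP k * 1 + bP k * G + c * H = gSeries k) :
    ‖MvPowerSeries.coeff
      (Finsupp.single 0 1 + Finsupp.single 1 (k - 2)) c‖ = 1 := by
  obtain ⟨n, rfl⟩ := Nat.exists_eq_add_of_le' hk
  have hmod : X 2 ∣ aP (n + 2) - c * X 0 := by
    have : aP (n + 2) - c * X 0 = gSeries (n + 2) - bP (n + 2) * G - c * X 1 * X 2 := by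
      rw [← hc, H]; ring
    rw [this]
    exact dvd_sub (dvd_sub (X_dvd_gSeries (by omega)) (X_dvd_G.mul_left _)) (dvd_mul_left _ _)
  have hcoeff := X_dvd_iff.1 hmod (single 0 2 + single 1 n) (by simp)
  have hshift : single 0 2 + single 1 n = (single 0 1 + single 1 n) + single (0 : Fin 3) 1 := by
    rw [add_right_comm, ← single_add]
  rw [map_sub, sub_eq_zero, coeff_aP, hshift, X_def, coeff_add_mul_monomial, mul_one] at hcoeff
  simp [← hcoeff]
end

section
/- Formal presentation of the series e: the families (q_{k,k}^{−1}·a_k)_{k≥2}, (q_{k,k}^{−1}·b_k)_{k≥2} and (q_{k,k}^{−1}·c_k)_{k≥2} are summable coefficientwise in ℂ[[x,y,z]] (for each fixed exponent only finitely many summands have a nonzero coefficient there), and their sums a = Σ_{k≥2} q_{k,k}^{−1}·a_k, b = Σ_{k≥2} q_{k,k}^{−1}·b_k, c = Σ_{k≥2} q_{k,k}^{−1}·c_k satisfy: a and b depend only on x,y and e = a·1 + b·G + c·H, where e is the formal power series whose coefficient at x^k z^i equals q_{i,k}/q_{k,k} for i ≥ k ≥ 2 and which has zero coefficient at every other monomial.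 -/
/-- The series e, with coefficient q_{i,k}/q_{k,k} at x^k z^i for i ≥ k ≥ 2
and zero coefficient at every other monomial. -/
noncomputable def eS : MvPowerSeries (Fin 3) ℂ :=
  fun d => if 2 ≤ d 0 ∧ d 1 = 0 ∧ d 0 ≤ d 2
    then ((q (d 2) (d 0) / q (d 0) (d 0) : ℚ) : ℂ) else 0

/-! For any weight giving `x` and `y` the same value, the recurrence keeps `a_k` and `b_k` weighted
homogeneous (of degrees `k` and `k - 1` in units of that value). With all weights `1` this bounds
their orders from below; with only `z` weighted it says they do not involve `z`. In the domain
`ℂ[[x,y,z]]` orders add, and `c_k·H = g_k - a_k - b_k·G` has order `≥ k` while `H` has order `1`,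
so `c_k` has order `≥ k - 1`. Hence all three normalized families have orders tending to `∞`, so
they are summable in the product topology, and summing
`q_{k,k}⁻¹·(a_k + b_k·G + c_k·H) = q_{k,k}⁻¹·g_k` over `k` gives `e`. -/

namespace MvPowerSeries

open Filter Topology

variable {σ R : Type*} [CommSemiring R] {w : σ → ℕ}

theorem isWeightedHomogeneous_zero (p : ℕ) :
    (0 : MvPowerSeries σ R).IsWeightedHomogeneous w p :=
  fun h => absurd rfl h

theorem isWeightedHomogeneous_one : (1 : MvPowerSeries σ R).IsWeightedHomogeneous w 0 := by
  classical
  intro d hd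
  rw [coeff_one] at hd
  split_ifs at hd with h
  · simp [h]
  · exact absurd rfl hd

theorem isWeightedHomogeneous_X (i : σ) :
    (X i : MvPowerSeries σ R).IsWeightedHomogeneous w (w i) := by
  classical
  intro d hd
  rw [coeff_X] at hd
  split_ifs at hd with h
  · simp [h, Finsupp.weight_single]
  · exact absurd rfl hd

theorem IsWeightedHomogeneous.smul {f : MvPowerSeries σ R} {p : ℕ}
    (hf : f.IsWeightedHomogeneous w p) (a : R) : (a • f).IsWeightedHomogeneous w p := fun hd =>
  hf (right_ne_zero_of_mul (by simpa using hd))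

theorem IsWeightedHomogeneous.neg {R : Type*} [CommRing R] {f : MvPowerSeries σ R} {p : ℕ}
    (hf : f.IsWeightedHomogeneous w p) : (-f).IsWeightedHomogeneous w p := fun hd =>
  hf (by simpa using hd)

theorem IsWeightedHomogeneous.pow {f : MvPowerSeries σ R} {p : ℕ}
    (hf : f.IsWeightedHomogeneous w p) (n : ℕ) :
    (f ^ n).IsWeightedHomogeneous w (n * p) := by
  induction n with
  | zero => rw [pow_zero, zero_mul]; exact isWeightedHomogeneous_one
  | succ n ih => rw [pow_succ, add_mul, one_mul]; exact ih.mul hf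

theorem IsWeightedHomogeneous.le_weightedOrder {f : MvPowerSeries σ R} {p : ℕ}
    (hf : f.IsWeightedHomogeneous w p) : (p : ℕ∞) ≤ f.weightedOrder w :=
  nat_le_weightedOrder w fun _ hd => hf.coeff_eq_zero hd.ne

theorem le_order_of_le_order_mul [NoZeroDivisors R] {f g : MvPowerSeries σ R} {m n : ℕ}
    (hg : g.order ≤ m) (h : (n : ℕ∞) ≤ (f * g).order) : ((n - m : ℕ) : ℕ∞) ≤ f.order := by
  rw [order_mul] at h
  rw [ENat.natCast_sub, tsub_le_iff_right]
  exact h.trans (add_le_add_right hg _)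

theorem tendsto_order_atTop_of_le {f : ℕ → MvPowerSeries σ R} {n : ℕ}
    (hf : ∀ k, ((k - n : ℕ) : ℕ∞) ≤ (f k).order) :
    Tendsto (fun k => (f k).order) atTop (𝓝 ⊤) :=
  ENat.tendsto_nhds_top_iff_natCast_lt.mpr fun m => eventually_atTop.mpr
    ⟨m + n + 1, fun k hk => lt_of_lt_of_le (by norm_cast; omega) (hf k)⟩

theorem finite_setOf_coeff_ne_zero {f : ℕ → MvPowerSeries σ R}
    (h : Tendsto (fun k => (f k).order) atTop (𝓝 ⊤)) (d : σ →₀ ℕ) :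
    {k | coeff d (f k) ≠ 0}.Finite := by
  obtain ⟨i, hi⟩ := eventually_atTop.mp (ENat.tendsto_nhds_top_iff_natCast_lt.mp h d.degree)
  exact (Set.finite_Iic i).subset fun k hk =>
    not_lt.mp fun hik => hk (coeff_of_lt_order (hi k hik.le))

open WithPiTopology

variable [TopologicalSpace R] [T2Space R]

theorem coeff_tsum {ι : Type*} {f : ι → MvPowerSeries σ R} (hf : Summable f) (d : σ →₀ ℕ) :
    coeff d (∑' i, f i) = ∑' i, coeff d (f i) :=
  (hasSum_iff_hasSum_coeff.mp hf.hasSum d).tsum_eq.symm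

theorem IsWeightedHomogeneous.tsum {ι : Type*} {p : ℕ} {f : ι → MvPowerSeries σ R}
    (hf : ∀ i, (f i).IsWeightedHomogeneous w p) :
    (∑' i, f i).IsWeightedHomogeneous w p := fun {d} hd => by
  by_contra hne
  have hs : Summable f :=
    by_contra fun hs => hd (by rw [tsum_eq_zero_of_not_summable hs, map_zero])
  exact hd (by simp [coeff_tsum hs, fun i => IsWeightedHomogeneous.coeff_eq_zero (hf i) hne])

end MvPowerSeries

theorem Finsupp.degree_fin_three (d : Fin 3 →₀ ℕ) : d.degree = d 0 + d 1 + d 2 := by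
  rw [degree_eq_sum, Fin.sum_univ_three]

open Filter Topology MvPowerSeries MvPowerSeries.WithPiTopology

section Homogeneity

variable {w : Fin 3 → ℕ}

theorem isWeightedHomogeneous_neg_X_one (hw : w 1 = w 0) :
    (-X 1 : MvPowerSeries (Fin 3) ℂ).IsWeightedHomogeneous w (w 0) :=
  IsWeightedHomogeneous.neg (hw ▸ isWeightedHomogeneous_X 1)

theorem isWeightedHomogeneous_recurrence (hw : w 1 = w 0) {f g : MvPowerSeries (Fin 3) ℂ}
    {n : ℕ} (hf : f.IsWeightedHomogeneous w ((n + 1) * w 0))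
    (hg : g.IsWeightedHomogeneous w (n * w 0)) (c : ℂ) :
    (-X 1 * f + c • (X 0 ^ 2 * g)).IsWeightedHomogeneous w ((n + 2) * w 0) := by
  have h1 : (-X 1 * f).IsWeightedHomogeneous w ((n + 2) * w 0) := by
    rw [show (n + 2) * w 0 = w 0 + (n + 1) * w 0 by ring]
    exact IsWeightedHomogeneous.mul (isWeightedHomogeneous_neg_X_one hw) hf
  have h2 : (c • (X 0 ^ 2 * g)).IsWeightedHomogeneous w ((n + 2) * w 0) := by
    rw [add_mul, add_comm]
    exact IsWeightedHomogeneous.smul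
      (IsWeightedHomogeneous.mul (IsWeightedHomogeneous.pow (isWeightedHomogeneous_X 0) 2) hg) c
  -- the exponent `d` in `IsWeightedHomogeneous` is an implicit binder, hence the explicit `fun`
  exact fun {_} => IsWeightedHomogeneous.add h1 h2

theorem isWeightedHomogeneous_aP (hw : w 1 = w 0) :
    ∀ k, (aP k).IsWeightedHomogeneous w (k * w 0)
  | 0 => isWeightedHomogeneous_zero _
  | 1 => isWeightedHomogeneous_zero _
  | 2 => IsWeightedHomogeneous.pow (isWeightedHomogeneous_X 0) 2
  | k + 3 => isWeightedHomogeneous_recurrence hw (isWeightedHomogeneous_aP hw (k + 2))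
      (isWeightedHomogeneous_aP hw (k + 1)) _

theorem isWeightedHomogeneous_bP (hw : w 1 = w 0) :
    ∀ k, (bP k).IsWeightedHomogeneous w ((k - 1) * w 0)
  | 0 => isWeightedHomogeneous_zero _
  | 1 => by simpa [bP] using isWeightedHomogeneous_one
  | 2 => by
    rw [show (2 - 1) * w 0 = w 0 by simp]
    exact IsWeightedHomogeneous.add (isWeightedHomogeneous_neg_X_one hw)
      (IsWeightedHomogeneous.smul (isWeightedHomogeneous_X 0) _)
  | k + 3 => isWeightedHomogeneous_recurrence hw (isWeightedHomogeneous_bP hw (k + 2))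
      (isWeightedHomogeneous_bP hw (k + 1)) _

end Homogeneity

section Order

theorem le_order_aP (k : ℕ) : (k : ℕ∞) ≤ (aP k).order := by
  simpa [order] using
    IsWeightedHomogeneous.le_weightedOrder (isWeightedHomogeneous_aP (w := fun _ => 1) rfl k)

theorem le_order_bP (k : ℕ) : ((k - 1 : ℕ) : ℕ∞) ≤ (bP k).order := by
  simpa [order] using
    IsWeightedHomogeneous.le_weightedOrder (isWeightedHomogeneous_bP (w := fun _ => 1) rfl k)

theorem two_le_order_G : 2 ≤ G.order :=
  nat_le_order (n := 2) fun d hd => by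
    rw [coeff_apply, G, if_neg]
    rw [Finsupp.degree_fin_three] at hd
    omega

theorem le_order_gSeries (k : ℕ) : (k : ℕ∞) ≤ (gSeries k).order :=
  nat_le_order fun d hd => by
    rw [coeff_apply, gSeries, if_neg]
    rw [Finsupp.degree_fin_three] at hd
    omega

theorem order_H_le_one : H.order ≤ 1 := by
  have : coeff (Finsupp.single 0 1) H ≠ 0 := by
    simp [H, X_def, monomial_mul_monomial, coeff_monomial, Finsupp.ext_iff, Fin.forall_fin_succ]
  simpa using order_le this

theorem le_order_of_presentation {k : ℕ} {c : MvPowerSeries (Fin 3) ℂ}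
    (h : aP k * 1 + bP k * G + c * H = gSeries k) : ((k - 1 : ℕ) : ℕ∞) ≤ c.order := by
  have hbG : (k : ℕ∞) ≤ (bP k * G).order :=
    calc (k : ℕ∞) ≤ ((k - 1 : ℕ) : ℕ∞) + (2 : ℕ) := by norm_cast; omega
      _ ≤ (bP k).order + G.order := add_le_add (le_order_bP k) two_le_order_G
      _ ≤ (bP k * G).order := le_order_mul
  have hcH : (k : ℕ∞) ≤ (c * H).order := by
    rw [show c * H = gSeries k - aP k - bP k * G by rw [← h]; ring]
    refine nat_le_order fun d hd => ?_
    replace hd : (d.degree : ℕ∞) < k := by exact_mod_cast hd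
    rw [map_sub, map_sub, coeff_of_lt_order (hd.trans_le (le_order_gSeries k)),
      coeff_of_lt_order (hd.trans_le (le_order_aP k)), coeff_of_lt_order (hd.trans_le hbG)]
    simp
  exact le_order_of_le_order_mul order_H_le_one hcH

end Order

section DependsOnXY

theorem dependsOnXY_iff (f : MvPowerSeries (Fin 3) ℂ) :
    DependsOnXY f ↔ f.IsWeightedHomogeneous (Pi.single 2 1) 0 := by
  simp [DependsOnXY, IsWeightedHomogeneous, Finsupp.weight_single_one_apply]

theorem dependsOnXY_aP (k : ℕ) : DependsOnXY (aP k) := by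
  have h : (aP k).IsWeightedHomogeneous (Pi.single 2 1) (k * (Pi.single 2 1 : Fin 3 → ℕ) 0) :=
    isWeightedHomogeneous_aP rfl k
  rw [dependsOnXY_iff]
  rwa [show k * (Pi.single 2 1 : Fin 3 → ℕ) 0 = 0 by simp] at h

theorem dependsOnXY_bP (k : ℕ) : DependsOnXY (bP k) := by
  have h : (bP k).IsWeightedHomogeneous (Pi.single 2 1)
      ((k - 1) * (Pi.single 2 1 : Fin 3 → ℕ) 0) :=
    isWeightedHomogeneous_bP rfl k
  rw [dependsOnXY_iff]
  rwa [show (k - 1) * (Pi.single 2 1 : Fin 3 → ℕ) 0 = 0 by simp] at h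

end DependsOnXY

noncomputable def normalized (F : ℕ → MvPowerSeries (Fin 3) ℂ) (k : ℕ) :
    MvPowerSeries (Fin 3) ℂ :=
  if 2 ≤ k then ((q k k : ℂ))⁻¹ • F k else 0

section Normalized

variable {F : ℕ → MvPowerSeries (Fin 3) ℂ}

theorem coeff_normalized (k : ℕ) (d : Fin 3 →₀ ℕ) :
    coeff d (normalized F k) = if 2 ≤ k then ((q k k : ℂ))⁻¹ * coeff d (F k) else 0 := by
  unfold normalized
  split_ifs <;> simp

theorem tendsto_order_normalized (hF : ∀ k, 2 ≤ k → ((k - 1 : ℕ) : ℕ∞) ≤ (F k).order) :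
    Tendsto (fun k => (normalized F k).order) atTop (𝓝 ⊤) :=
  tendsto_order_atTop_of_le fun k => by
    unfold normalized
    split_ifs with hk
    · exact (hF k hk).trans le_order_smul
    · simp

theorem finite_setOf_coeff_smul_ne_zero
    (hF : Tendsto (fun k => (normalized F k).order) atTop (𝓝 ⊤)) (d : Fin 3 →₀ ℕ) :
    {k : ℕ | 2 ≤ k ∧ coeff d (((q k k : ℂ))⁻¹ • F k) ≠ 0}.Finite :=
  (finite_setOf_coeff_ne_zero hF d).subset fun k hk => by
    simpa [normalized, hk.1] using hk.2

theorem coeff_tsum_normalized (hF : Tendsto (fun k => (normalized F k).order) atTop (𝓝 ⊤))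
    (d : Fin 3 →₀ ℕ) : coeff d (∑' k, normalized F k) =
      ∑' k : ℕ, if 2 ≤ k then ((q k k : ℂ))⁻¹ * coeff d (F k) else 0 := by
  simp_rw [coeff_tsum (summable_of_tendsto_order_atTop_nhds_top hF), coeff_normalized]

theorem dependsOnXY_tsum_normalized (hF : ∀ k, DependsOnXY (F k)) :
    DependsOnXY (∑' k, normalized F k) := by
  rw [dependsOnXY_iff]
  refine IsWeightedHomogeneous.tsum fun k => ?_
  unfold normalized
  split_ifs
  · exact IsWeightedHomogeneous.smul ((dependsOnXY_iff _).mp (hF k)) _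
  · exact isWeightedHomogeneous_zero 0

end Normalized

theorem hasSum_normalized_gSeries : HasSum (normalized gSeries) eS := by
  rw [hasSum_iff_hasSum_coeff]
  intro d
  convert hasSum_single (d 0) fun k hk => ?_ using 1
  · rw [coeff_normalized, coeff_apply, coeff_apply, eS, gSeries]
    by_cases h : 2 ≤ d 0 ∧ d 1 = 0 ∧ d 0 ≤ d 2
    · simp [h, div_eq_inv_mul]
    · simp only [if_neg h]
      split_ifs <;> simp_all
  · rw [coeff_normalized, coeff_apply, gSeries]
    simp [Ne.symm hk]

theorem normalized_gSeries_eq {c : ℕ → MvPowerSeries (Fin 3) ℂ}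
    (hc : ∀ k : ℕ, 2 ≤ k → aP k * 1 + bP k * G + c k * H = gSeries k) (k : ℕ) :
    normalized gSeries k = normalized aP k * 1 + normalized bP k * G + normalized c k * H := by
  unfold normalized
  split_ifs with hk
  · rw [← hc k hk, smul_add, smul_add, smul_mul_assoc, smul_mul_assoc, smul_mul_assoc]
  · simp

theorem e_formal_presentation
    -- c k is the unique series with a_k·1 + b_k·G + c_k·H = g_k (k ≥ 2)
    (c : ℕ → MvPowerSeries (Fin 3) ℂ)
    (hc : ∀ k : ℕ, 2 ≤ k → aP k * 1 + bP k * G + c k * H = gSeries k) :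
    -- coefficientwise summability of the three families
    (∀ d : Fin 3 →₀ ℕ,
      {k : ℕ | 2 ≤ k ∧ MvPowerSeries.coeff d (((q k k : ℂ))⁻¹ • aP k) ≠ 0}.Finite) ∧
    (∀ d : Fin 3 →₀ ℕ,
      {k : ℕ | 2 ≤ k ∧ MvPowerSeries.coeff d (((q k k : ℂ))⁻¹ • bP k) ≠ 0}.Finite) ∧
    (∀ d : Fin 3 →₀ ℕ,
      {k : ℕ | 2 ≤ k ∧ MvPowerSeries.coeff d (((q k k : ℂ))⁻¹ • c k) ≠ 0}.Finite) ∧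
    -- the coefficientwise sums give a presentation of e
    ∃ a b cc : MvPowerSeries (Fin 3) ℂ,
      (∀ d : Fin 3 →₀ ℕ, MvPowerSeries.coeff d a =
        ∑' k : ℕ, if 2 ≤ k then ((q k k : ℂ))⁻¹ * MvPowerSeries.coeff d (aP k) else 0) ∧
      (∀ d : Fin 3 →₀ ℕ, MvPowerSeries.coeff d b =
        ∑' k : ℕ, if 2 ≤ k then ((q k k : ℂ))⁻¹ * MvPowerSeries.coeff d (bP k) else 0) ∧
      (∀ d : Fin 3 →₀ ℕ, MvPowerSeries.coeff d cc =
        ∑' k : ℕ, if 2 ≤ k then ((q k k : ℂ))⁻¹ * MvPowerSeries.coeff d (c k) else 0) ∧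
      DependsOnXY a ∧ DependsOnXY b ∧
      eS = a * 1 + b * G + cc * H := by
  have hA := tendsto_order_normalized fun k _ =>
    (Nat.cast_le.mpr (Nat.sub_le k 1)).trans (le_order_aP k)
  have hB := tendsto_order_normalized fun k _ => le_order_bP k
  have hC := tendsto_order_normalized fun k hk => le_order_of_presentation (hc k hk)
  refine ⟨finite_setOf_coeff_smul_ne_zero hA, finite_setOf_coeff_smul_ne_zero hB,
    finite_setOf_coeff_smul_ne_zero hC, _, _, _, coeff_tsum_normalized hA,
    coeff_tsum_normalized hB, coeff_tsum_normalized hC, dependsOnXY_tsum_normalized dependsOnXY_aP,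
    dependsOnXY_tsum_normalized dependsOnXY_bP, hasSum_normalized_gSeries.unique ?_⟩
  rw [funext (normalized_gSeries_eq hc)]
  exact (((summable_of_tendsto_order_atTop_nhds_top hA).hasSum.mul_right 1).add
    ((summable_of_tendsto_order_atTop_nhds_top hB).hasSum.mul_right G)).add
    ((summable_of_tendsto_order_atTop_nhds_top hC).hasSum.mul_right H)
end

section
/- Necessary coefficient growth in any presentation of e: if a, b, c ∈ ℂ[[x,y,z]] with a and b depending only on x,y satisfy e = a·1 + b·G + c·H, then for every k ≥ 2 the coefficient of a at the monomial x²y^{k−2} (z-exponent 0) has absolute value equal to 1/q_{k,k}. -/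
open Finset Nat

section

open Polynomial

variable {R : Type*} [CommRing R]

theorem coeff_taylor_one_eq_sum_choose {f : R[X]} {N : ℕ} (hf : f.natDegree < N) (t : ℕ) :
    (taylor 1 f).coeff t = ∑ s ∈ range N, f.coeff s * s.choose t := by
  rw [taylor_coeff, hasseDeriv_apply, eval_sum, sum_over_range' _ (by simp) N hf]
  simp [mul_comm]

variable (R) (m : ℕ)

noncomputable def bernsteinUpper : R[X] :=
  ∑ ν ∈ Ico (m + 1) (2 * m + 2), bernsteinPolynomial R (2 * m + 1) ν

theorem one_sub_bernsteinUpper :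
    1 - bernsteinUpper R m = ∑ ν ∈ range (m + 1), bernsteinPolynomial R (2 * m + 1) ν := by
  rw [← bernsteinPolynomial.sum R (2 * m + 1), bernsteinUpper,
    ← sum_range_add_sum_Ico _ (by omega : m + 1 ≤ 2 * m + 1 + 1), add_sub_cancel_right]

theorem X_pow_dvd_bernsteinUpper : X ^ (m + 1) ∣ bernsteinUpper R m := by
  refine dvd_sum fun ν hν => ?_
  exact ((pow_dvd_pow X (mem_Ico.1 hν).1).mul_left _).mul_right _

theorem one_sub_X_pow_dvd_one_sub_bernsteinUpper :
    (1 - X) ^ (m + 1) ∣ 1 - bernsteinUpper R m := by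
  rw [one_sub_bernsteinUpper]
  refine dvd_sum fun ν hν => ?_
  exact (pow_dvd_pow _ (by have := mem_range.1 hν; omega)).mul_left _

theorem natDegree_bernsteinUpper_lt : (bernsteinUpper R m).natDegree < 2 * m + 2 := by
  refine Nat.lt_succ_of_le (natDegree_sum_le_of_forall_le _ _ fun ν hν => ?_)
  have := (mem_Ico.1 hν).2
  unfold bernsteinPolynomial
  compute_degree
  omega

theorem coeff_bernsteinPolynomial_self {n ν : ℕ} (h : ν ≤ n) :
    (bernsteinPolynomial R n ν).coeff n = (-1) ^ (n - ν) * n.choose ν := by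
  obtain ⟨k, rfl⟩ := Nat.exists_eq_add_of_le h
  have hform : bernsteinPolynomial R (ν + k) ν
      = C ((-1) ^ k * (ν + k).choose ν : R) * (X + C (-1)) ^ k * X ^ ν := by
    simp only [bernsteinPolynomial, Nat.add_sub_cancel_left, map_mul, map_pow, C_neg, C_1,
      map_natCast]
    rw [show (1 - X : R[X]) = -1 * (X + -1) by ring, mul_pow]
    ring
  rw [hform, mul_assoc, coeff_C_mul, add_comm ν k, coeff_mul_X_pow, coeff_X_add_C_pow]
  simp [add_comm]

theorem coeff_bernsteinUpper_top :
    (bernsteinUpper R m).coeff (2 * m + 1) = (-1) ^ m * ((2 * m).choose m : R) := by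
  have hlow := congrArg (coeff · (2 * m + 1)) (one_sub_bernsteinUpper R m)
  simp only [coeff_sub, coeff_one, finsetSum_coeff] at hlow
  rw [if_neg (by omega), zero_sub, neg_eq_iff_eq_neg, ← sum_neg_distrib] at hlow
  have hsign : ∀ ν ∈ range (m + 1), -((-1) ^ (2 * m + 1 - ν) * ((2 * m + 1).choose ν : R))
      = (-1) ^ ν * (2 * m + 1).choose ν := by
    intro ν hν
    rw [show 2 * m + 1 - ν = 2 * (m - ν) + ν + 1 by have := mem_range.1 hν; omega, pow_succ,
      pow_add, pow_mul, neg_one_sq, one_pow, one_mul, mul_neg_one, neg_mul, neg_neg]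
  rw [hlow, sum_congr rfl fun ν hν => by
    rw [coeff_bernsteinPolynomial_self R (by have := mem_range.1 hν; omega), hsign ν hν]]
  have := congrArg (Int.cast : ℤ → R)
    (Int.alternating_sum_range_choose_eq_choose (n := 2 * m) (m := m))
  push_cast at this
  exact this

theorem taylor_one_coeff_bernsteinUpper {t : ℕ} (ht : t ≤ m) :
    (taylor 1 (bernsteinUpper R m)).coeff t = if t = 0 then 1 else 0 := by
  have hdvd : X ^ (m + 1) ∣ taylor 1 (1 - bernsteinUpper R m) := by
    obtain ⟨g, hg⟩ := one_sub_X_pow_dvd_one_sub_bernsteinUpper R m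
    refine ⟨(-1) ^ (m + 1) * taylor 1 g, ?_⟩
    rw [hg, taylor_mul, taylor_pow, map_sub, taylor_X, taylor_one, C_1]
    ring
  have := X_pow_dvd_iff.1 hdvd t (by omega)
  rw [map_sub, taylor_one, C_1, coeff_sub, sub_eq_zero, coeff_one] at this
  exact this.symm

theorem sum_Ico_coeff_bernsteinUpper_mul_choose {t : ℕ} (ht : t ≤ m) :
    ∑ n ∈ Ico (m + 1) (2 * m + 2), (bernsteinUpper R m).coeff n * n.choose t
      = if t = 0 then 1 else 0 := by
  have hlow : ∑ n ∈ range (m + 1), (bernsteinUpper R m).coeff n * n.choose t = 0 :=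
    sum_eq_zero fun n hn => by
      rw [X_pow_dvd_iff.1 (X_pow_dvd_bernsteinUpper R m) n (mem_range.1 hn), zero_mul]
  rw [← taylor_one_coeff_bernsteinUpper R m ht,
    coeff_taylor_one_eq_sum_choose (natDegree_bernsteinUpper_lt R m),
    ← sum_range_add_sum_Ico _ (by omega : m + 1 ≤ 2 * m + 2), hlow, zero_add]

end

theorem factorial_system_apply_zero {K : Type*} [Field K] [CharZero K] {m : ℕ} (B : ℕ → K)
    (hB : ∀ n ∈ Ico (m + 1) (2 * m + 2),
      ∑ t ∈ range (m + 1), B t / (n - t)! = if n = 2 * m + 1 then 1 else 0) :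
    B 0 = (2 * m + 1)! * ((-1) ^ m * (2 * m).choose m) := by
  set f := bernsteinUpper K m
  have hfactorial : ∀ n t, t ≤ n → (n ! : K) / (n - t)! = t ! * n.choose t := by
    intro n t htn
    rw [div_eq_iff (Nat.cast_ne_zero.2 (factorial_ne_zero _)),
      ← Nat.choose_mul_factorial_mul_factorial htn]
    push_cast
    ring
  calc B 0 = ∑ t ∈ range (m + 1), B t * t ! * (if t = 0 then 1 else 0) := by simp
    _ = ∑ t ∈ range (m + 1),
          B t * t ! * ∑ n ∈ Ico (m + 1) (2 * m + 2), f.coeff n * n.choose t :=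
        sum_congr rfl fun t ht => by
          rw [sum_Ico_coeff_bernsteinUpper_mul_choose K m (Nat.lt_succ_iff.1 (mem_range.1 ht))]
    _ = ∑ n ∈ Ico (m + 1) (2 * m + 2),
          n ! * f.coeff n * ∑ t ∈ range (m + 1), B t / (n - t)! := by
        simp only [mul_sum]
        rw [sum_comm]
        refine sum_congr rfl fun n hn => sum_congr rfl fun t ht => ?_
        have htn : t ≤ n := by have := mem_range.1 ht; have := (mem_Ico.1 hn).1; omega
        linear_combination (-(f.coeff n * B t)) * hfactorial n t htn
    _ = (2 * m + 1)! * f.coeff (2 * m + 1) := by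
        rw [sum_congr rfl fun n hn => by rw [hB n hn]]
        simp only [mul_ite, mul_one, mul_zero, sum_ite_eq', mem_Ico]
        rw [if_pos (by omega)]
    _ = _ := by rw [coeff_bernsteinUpper_top]

theorem rise_succ (m : ℕ) : rise (m + 1) = (2 * m)! / (4 ^ m * m !) := by
  induction m with
  | zero => simp [rise]
  | succ m ih =>
    have hstep : rise (m + 2) = rise (m + 1) * (1 / 2 + m) := by simp [rise, prod_range_succ]
    rw [hstep, ih, show 2 * (m + 1) = 2 * m + 1 + 1 by ring, factorial_succ, factorial_succ,
      factorial_succ]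
    push_cast
    field_simp
    ring

theorem inv_q_self (m : ℕ) : (q (m + 1) (m + 1))⁻¹ = (2 * m + 1)! * (2 * m).choose m := by
  rw [q, rise_succ, Nat.add_sub_cancel, Nat.sub_self, show m + 1 + (m + 1) - 1 = 2 * m + 1 by omega,
    Nat.cast_choose ℚ (by omega : m ≤ 2 * m), show 2 * m - m = m by omega]
  field_simp
  ring

theorem q_self_ne_zero (m : ℕ) : q (m + 1) (m + 1) ≠ 0 := by
  intro h
  have hinv := inv_q_self m
  have := choose_pos (by omega : m ≤ 2 * m)
  rw [h, inv_zero] at hinv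
  exact (by positivity : (0 : ℚ) < _).ne hinv

open MvPowerSeries

noncomputable def mono (p u r : ℕ) : Fin 3 →₀ ℕ :=
  Finsupp.single 0 p + Finsupp.single 1 u + Finsupp.single 2 r

section mono

variable (p u r p' u' r' : ℕ)

@[simp] theorem mono_apply_zero : mono p u r 0 = p := by simp [mono]
@[simp] theorem mono_apply_one : mono p u r 1 = u := by simp [mono]
@[simp] theorem mono_apply_two : mono p u r 2 = r := by simp [mono]

theorem eq_mono (d : Fin 3 →₀ ℕ) : d = mono (d 0) (d 1) (d 2) := by
  ext i; fin_cases i <;> simp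

theorem mono_add : mono p u r + mono p' u' r' = mono (p + p') (u + u') (r + r') := by
  ext i; fin_cases i <;> simp

theorem mono_le_mono_iff : mono p' u' r' ≤ mono p u r ↔ p' ≤ p ∧ u' ≤ u ∧ r' ≤ r := by
  simp [Finsupp.le_def, Fin.forall_fin_succ]

theorem mono_sub : mono p u r - mono p' u' r' = mono (p - p') (u - u') (r - r') := by
  ext i; fin_cases i <;> simp

end mono

theorem coeff_mono_mul_monomial {R : Type*} [Semiring R] (f : MvPowerSeries (Fin 3) R)
    (p u r p' u' r' : ℕ) :
    coeff (mono p u r) (f * monomial (mono p' u' r') 1) =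
      if p' ≤ p ∧ u' ≤ u ∧ r' ≤ r then coeff (mono (p - p') (u - u') (r - r')) f
      else 0 := by
  simp only [coeff_mul_monomial, mono_le_mono_iff, mono_sub, mul_one]

theorem H_eq_monomial : H = monomial (mono 0 1 1) (1 : ℂ) - monomial (mono 1 0 0) 1 := by
  simp only [H, X, monomial_mul_monomial, mono, mul_one, Finsupp.single_zero, zero_add,
    add_zero]

theorem coeff_mono_G (p u r : ℕ) :
    coeff (mono p u r) G = if p = 1 ∧ u = 0 ∧ 1 ≤ r then (r ! : ℂ)⁻¹ else 0 := by
  simp [G, coeff_apply]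

theorem eq_of_mem_antidiagonal_of_coeff_mul_G_ne_zero {b : MvPowerSeries (Fin 3) ℂ}
    (hb : DependsOnXY b) {p u r : ℕ} {d : (Fin 3 →₀ ℕ) × (Fin 3 →₀ ℕ)}
    (hd : d ∈ antidiagonal (mono p u r)) (hne : coeff d.1 b * coeff d.2 G ≠ 0) :
    1 ≤ p ∧ 1 ≤ r ∧ d = (mono (p - 1) u 0, mono 1 0 r) := by
  obtain ⟨d₁, d₂⟩ := d
  have hb₂ : d₁ 2 = 0 := hb _ (left_ne_zero_of_mul hne)
  have hG : d₂ 0 = 1 ∧ d₂ 1 = 0 ∧ 1 ≤ d₂ 2 := by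
    by_contra hG
    rw [eq_mono d₂, coeff_mono_G, if_neg hG, mul_zero] at hne
    exact hne rfl
  have hsum := mem_antidiagonal.1 hd
  have h₀ := DFunLike.congr_fun hsum 0
  have h₁ := DFunLike.congr_fun hsum 1
  have h₂ := DFunLike.congr_fun hsum 2
  simp only [Finsupp.add_apply, mono_apply_zero, mono_apply_one, mono_apply_two] at h₀ h₁ h₂
  have e₁ : d₁ = mono (p - 1) u 0 := by ext i; fin_cases i <;> simp <;> omega
  have e₂ : d₂ = mono 1 0 r := by ext i; fin_cases i <;> simp <;> omega
  exact ⟨by omega, by omega, by rw [e₁, e₂]⟩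

theorem coeff_mono_mul_G {b : MvPowerSeries (Fin 3) ℂ} (hb : DependsOnXY b) (p u r : ℕ) :
    coeff (mono p u r) (b * G)
      = if 1 ≤ p ∧ 1 ≤ r then coeff (mono (p - 1) u 0) b / r ! else 0 := by
  rw [coeff_mul]
  split_ifs with hpr
  · rw [sum_eq_single (mono (p - 1) u 0, mono 1 0 r)]
    · rw [coeff_mono_G, if_pos ⟨rfl, rfl, hpr.2⟩, div_eq_mul_inv]
    · intro d hd hne
      by_contra h
      exact hne (eq_of_mem_antidiagonal_of_coeff_mul_G_ne_zero hb hd h).2.2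
    · intro h
      exact absurd (HasAntidiagonal.mem_antidiagonal.2 (by rw [mono_add]; congr 1 <;> omega)) h
  · refine sum_eq_zero fun d hd => ?_
    by_contra h
    obtain ⟨hp, hr, -⟩ := eq_of_mem_antidiagonal_of_coeff_mul_G_ne_zero hb hd h
    exact hpr ⟨hp, hr⟩

theorem DependsOnXY.coeff_mono_eq_zero {f : MvPowerSeries (Fin 3) ℂ} (hf : DependsOnXY f)
    (p u : ℕ) {r : ℕ} (hr : r ≠ 0) : coeff (mono p u r) f = 0 :=
  by_contra fun hne => hr (by simpa using hf _ hne)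

theorem coeff_mono_eS (p u r : ℕ) :
    coeff (mono p u r) eS =
      if 2 ≤ p ∧ u = 0 ∧ p ≤ r then ((q r p / q p p : ℚ) : ℂ) else 0 := by
  simp [eS, coeff_apply]

variable {a b c : MvPowerSeries (Fin 3) ℂ}

theorem coeff_mono_eS_of_eq (hb : DependsOnXY b) (h : eS = a * 1 + b * G + c * H) (p u r : ℕ) :
    coeff (mono p u r) eS = coeff (mono p u r) a
      + (if 1 ≤ p ∧ 1 ≤ r then coeff (mono (p - 1) u 0) b / r ! else 0)
      + (if 1 ≤ u ∧ 1 ≤ r then coeff (mono p (u - 1) (r - 1)) c else 0)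
      - (if 1 ≤ p then coeff (mono (p - 1) u r) c else 0) := by
  rw [h, map_add, map_add, mul_one, coeff_mono_mul_G hb, H_eq_monomial, mul_sub, map_sub,
    coeff_mono_mul_monomial, coeff_mono_mul_monomial]
  simp only [zero_le, true_and, and_true, Nat.sub_zero]
  ring

theorem coeff_a_eq_neg_coeff_b (ha : DependsOnXY a) (hb : DependsOnXY b)
    (h : eS = a * 1 + b * G + c * H) {m : ℕ} (hm : 1 ≤ m) :
    coeff (mono 2 (m - 1) 0) a = -coeff (mono 0 m 0) b := by
  have e₁ := coeff_mono_eS_of_eq hb h 0 (m + 1) 2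
  have e₂ := coeff_mono_eS_of_eq hb h 1 m 1
  have e₃ := coeff_mono_eS_of_eq hb h 2 (m - 1) 0
  simp only [coeff_mono_eS, ha.coeff_mono_eq_zero _ _ two_ne_zero,
    ha.coeff_mono_eq_zero _ _ one_ne_zero] at e₁ e₂ e₃
  norm_num [hm] at e₁ e₂ e₃
  linear_combination -e₁ - e₂ - e₃

theorem sum_coeff_div_factorial_of_eS_eq (ha : DependsOnXY a) (hb : DependsOnXY b)
    (h : eS = a * 1 + b * G + c * H) {m : ℕ} (hm : 1 ≤ m) {n : ℕ}
    (hn : n ∈ Ico (m + 1) (2 * m + 2)) :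
    ∑ t ∈ range (m + 1), coeff (mono t (m - t) 0) b / (n - t)!
      = if n = 2 * m + 1 then 1 else 0 := by
  obtain ⟨hn₁, hn₂⟩ := mem_Ico.1 hn
  set γ : ℕ → ℂ := fun t => if t ≤ m then coeff (mono t (m - t) (n - t)) c else 0
  have hγ₀ : γ 0 = 0 := by
    have e := coeff_mono_eS_of_eq hb h 0 (m + 1) (n + 1)
    simp only [coeff_mono_eS, ha.coeff_mono_eq_zero _ _ (succ_ne_zero n)] at e
    simpa [γ] using e.symm
  have hstep : ∀ t ∈ range (m + 1), coeff (mono (t + 1) (m - t) (n - t)) eS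
      = coeff (mono t (m - t) 0) b / (n - t)! + (γ (t + 1) - γ t) := by
    intro t ht
    have htm := mem_range.1 ht
    have hγ_succ : (if 1 ≤ m - t ∧ 1 ≤ n - t then
        coeff (mono (t + 1) (m - t - 1) (n - t - 1)) c else 0) = γ (t + 1) := by
      simp only [γ, Nat.sub_sub]
      exact if_congr (by omega) rfl rfl
    rw [coeff_mono_eS_of_eq hb h, ha.coeff_mono_eq_zero _ _ (by omega), hγ_succ,
      if_pos ⟨by omega, by omega⟩, if_pos (by omega), Nat.add_sub_cancel]
    simp only [γ, if_pos (Nat.lt_succ_iff.1 htm)]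
    ring
  have heS : ∑ t ∈ range (m + 1), coeff (mono (t + 1) (m - t) (n - t)) eS
      = if n = 2 * m + 1 then 1 else 0 := by
    rw [sum_eq_single_of_mem m (self_mem_range_succ m) fun t _ htm => by
      rw [coeff_mono_eS, if_neg (by omega)], coeff_mono_eS]
    by_cases hn : n = 2 * m + 1
    · rw [if_pos ⟨by omega, by omega, by omega⟩, if_pos hn, show n - m = m + 1 by omega,
        div_self (q_self_ne_zero m), Rat.cast_one]
    · rw [if_neg (by omega), if_neg hn]
  rw [← heS, sum_congr rfl hstep, sum_add_distrib, sum_range_sub, hγ₀]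
  simp [γ]

theorem e_presentation_coefficient_growth
    (a b c : MvPowerSeries (Fin 3) ℂ)
    (ha : DependsOnXY a) (hb : DependsOnXY b)
    (h : eS = a * 1 + b * G + c * H) (k : ℕ) (hk : 2 ≤ k) :
    ‖(MvPowerSeries.coeff
      (Finsupp.single 0 2 + Finsupp.single 1 (k - 2)) a)‖ = 1 / ((q k k : ℝ)) := by
  obtain ⟨m, rfl⟩ : ∃ m, k = m + 1 := ⟨k - 1, by omega⟩
  have hm : 1 ≤ m := by omega
  have hmono : Finsupp.single 0 2 + Finsupp.single 1 (m + 1 - 2) = mono 2 (m - 1) 0 := by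
    ext i; fin_cases i <;> simp [mono]
  have hb₀ : coeff (mono 0 m 0) b = (2 * m + 1)! * ((-1) ^ m * (2 * m).choose m) :=
    factorial_system_apply_zero (fun t => coeff (mono t (m - t) 0) b)
      fun n hn => sum_coeff_div_factorial_of_eS_eq ha hb h hm hn
  rw [hmono, coeff_a_eq_neg_coeff_b ha hb h hm, hb₀, one_div, ← Rat.cast_inv, inv_q_self]
  simp
end

section
/- Gabrielov-type counterexample to nested linear analytic approximation: there do NOT exist power series a, b, c ∈ ℂ[[x,y,z]] with a and b depending only on x,y, each of a, b, c having geometrically bounded coefficients, such that e = a·1 + b·G + c·H. (Note that all coefficients of e have absolute value at most 1, so e itself has geometrically bounded coefficients, and e does admit such a presentation with formal a, b, c.) -/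
/-- A power series has geometrically bounded coefficients (equivalently, is
convergent) if |coeff_α| ≤ C·R^{|α|} for some C, R > 0, |α| the total degree. -/
def GeomBounded (F : MvPowerSeries (Fin 3) ℂ) : Prop :=
  ∃ C R : ℝ, 0 < C ∧ 0 < R ∧ ∀ d : Fin 3 →₀ ℕ,
    ‖MvPowerSeries.coeff d F‖ ≤ C * R ^ (d.sum fun _ m => m)

/-!
For `k ≥ 1` let `L_k F` be the coefficient of `y^k z^(2k)` in `F(yz, y, z)`. This linear
functional kills every multiple of `H = yz - x` and every series not involving `z`, while
`L_k e = 1` for `k ≥ 2`: the only monomial of `e` it sees is `x^k z^k`, with coefficient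
`q_{k,k}/q_{k,k}`. So `e = a + bG + cH` forces `L_{n+1}(bG) = 1` for all `n ≥ 1`. But when `b`
does not involve `z`, `L_{n+1}(bG)` is the sum of the `n + 1` terms `b_{p,q,0} / (n + q + 1)!`
over `p + q = n`, hence at most `C R^n / n!` if `|b_α| ≤ C R^|α|`, which tends to `0`.
-/

open MvPowerSeries Finset Nat

noncomputable def xyz (i j l : ℕ) : Fin 3 →₀ ℕ :=
  Finsupp.single 0 i + Finsupp.single 1 j + Finsupp.single 2 l

section Exponents

variable {i j l : ℕ}

@[simp] lemma xyz_apply_zero : xyz i j l 0 = i := by simp [xyz]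
@[simp] lemma xyz_apply_one : xyz i j l 1 = j := by simp [xyz]
@[simp] lemma xyz_apply_two : xyz i j l 2 = l := by simp [xyz]

lemma eq_xyz (d : Fin 3 →₀ ℕ) : d = xyz (d 0) (d 1) (d 2) := by
  ext s; fin_cases s <;> simp

lemma xyz_add (i' j' l' : ℕ) : xyz i j l + xyz i' j' l' = xyz (i + i') (j + j') (l + l') := by
  ext s; fin_cases s <;> simp

lemma xyz_eq_xyz_iff {i' j' l' : ℕ} :
    xyz i j l = xyz i' j' l' ↔ i = i' ∧ j = j' ∧ l = l' := by
  simp [Finsupp.ext_iff, Fin.forall_fin_succ]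

lemma xyz_le_xyz_iff {i' j' l' : ℕ} :
    xyz i j l ≤ xyz i' j' l' ↔ i ≤ i' ∧ j ≤ j' ∧ l ≤ l' := by
  simp [Finsupp.le_def, Fin.forall_fin_succ]

lemma degree_xyz : (xyz i j l).sum (fun _ m => m) = i + j + l := by
  rw [Finsupp.sum_fintype _ _ fun _ => rfl]
  simp [Fin.sum_univ_three, add_assoc]

end Exponents

section Monomials

variable {R : Type*} [CommSemiring R] (c : MvPowerSeries (Fin 3) R) (i j l : ℕ)

lemma X_zero_eq_monomial : (X 0 : MvPowerSeries (Fin 3) R) = monomial (xyz 1 0 0) 1 := by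
  simp [X_def, xyz]

lemma X_one_mul_X_two_eq_monomial :
    (X 1 * X 2 : MvPowerSeries (Fin 3) R) = monomial (xyz 0 1 1) 1 := by
  simp [X_def, monomial_mul_monomial, xyz]

lemma coeff_xyz_succ_mul_X_zero : coeff (xyz (i + 1) j l) (c * X 0) = coeff (xyz i j l) c := by
  rw [X_zero_eq_monomial, show xyz (i + 1) j l = xyz i j l + xyz 1 0 0 by simp [xyz_add],
    coeff_add_mul_monomial, mul_one]

lemma coeff_xyz_zero_mul_X_zero : coeff (xyz 0 j l) (c * X 0) = 0 := by
  rw [X_zero_eq_monomial, coeff_mul_monomial, if_neg (by simp [xyz_le_xyz_iff])]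

lemma coeff_xyz_succ_mul_X_one_mul_X_two :
    coeff (xyz i (j + 1) (l + 1)) (c * (X 1 * X 2)) = coeff (xyz i j l) c := by
  rw [X_one_mul_X_two_eq_monomial,
    show xyz i (j + 1) (l + 1) = xyz i j l + xyz 0 1 1 by simp [xyz_add], coeff_add_mul_monomial,
    mul_one]

lemma coeff_xyz_zero_mul_X_one_mul_X_two : coeff (xyz i 0 l) (c * (X 1 * X 2)) = 0 := by
  rw [X_one_mul_X_two_eq_monomial, coeff_mul_monomial, if_neg (by simp [xyz_le_xyz_iff])]

end Monomials

section YZCoeff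

variable {R : Type*} [CommSemiring R]

/-- The coefficient of `y^k z^(2k)` in `F(yz, y, z)`: the substitution `x ↦ yz` sends
`x^p y^q z^r` to `y^k z^(2k)` exactly when `p + q = k` and `r = k + q`. -/
noncomputable def yzCoeff (k : ℕ) : MvPowerSeries (Fin 3) R →ₗ[R] R :=
  ∑ pq ∈ antidiagonal k, coeff (xyz pq.1 pq.2 (k + pq.2))

lemma yzCoeff_apply (k : ℕ) (F : MvPowerSeries (Fin 3) R) :
    yzCoeff k F = ∑ pq ∈ antidiagonal k, coeff (xyz pq.1 pq.2 (k + pq.2)) F := by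
  simp [yzCoeff]

variable (c : MvPowerSeries (Fin 3) R) (k : ℕ)

lemma yzCoeff_succ_mul_X_zero :
    yzCoeff (k + 1) (c * X 0) =
      ∑ pq ∈ antidiagonal k, coeff (xyz pq.1 pq.2 (k + pq.2 + 1)) c := by
  rw [yzCoeff_apply, sum_antidiagonal_succ, coeff_xyz_zero_mul_X_zero, zero_add]
  refine sum_congr rfl fun pq _ => ?_
  rw [coeff_xyz_succ_mul_X_zero, add_right_comm]

lemma yzCoeff_succ_mul_X_one_mul_X_two :
    yzCoeff (k + 1) (c * (X 1 * X 2)) =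
      ∑ pq ∈ antidiagonal k, coeff (xyz pq.1 pq.2 (k + pq.2 + 1)) c := by
  rw [yzCoeff_apply, sum_antidiagonal_succ', coeff_xyz_zero_mul_X_one_mul_X_two, zero_add]
  refine sum_congr rfl fun pq _ => ?_
  rw [show k + 1 + (pq.2 + 1) = k + pq.2 + 1 + 1 by ring, coeff_xyz_succ_mul_X_one_mul_X_two]

end YZCoeff

lemma yzCoeff_mul_H (c : MvPowerSeries (Fin 3) ℂ) (k : ℕ) : yzCoeff k (c * H) = 0 := by
  rw [H, mul_sub, map_sub, sub_eq_zero]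
  cases k with
  | zero => simp [yzCoeff_apply, coeff_xyz_zero_mul_X_zero, coeff_xyz_zero_mul_X_one_mul_X_two]
  | succ k => rw [yzCoeff_succ_mul_X_zero, yzCoeff_succ_mul_X_one_mul_X_two]

lemma yzCoeff_eq_zero_of_dependsOnXY {a : MvPowerSeries (Fin 3) ℂ} (ha : DependsOnXY a) {k : ℕ}
    (hk : k ≠ 0) : yzCoeff k a = 0 := by
  rw [yzCoeff_apply]
  refine sum_eq_zero fun pq _ => ?_
  by_contra h
  have := ha _ h
  simp only [xyz_apply_two] at this
  omega

lemma q_self_ne_zero_s16 (k : ℕ) : q k k ≠ 0 := by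
  have : 0 < rise k := prod_pos fun j _ => by positivity
  unfold q
  positivity

lemma yzCoeff_eS {k : ℕ} (hk : 2 ≤ k) : yzCoeff k eS = 1 := by
  rw [yzCoeff_apply, sum_eq_single_of_mem (k, 0) (by simp)]
  · simp [coeff_apply, eS, hk, div_self (q_self_ne_zero_s16 k)]
  · rintro ⟨p, q⟩ hpq hne
    rw [HasAntidiagonal.mem_antidiagonal] at hpq
    rw [coeff_apply, eS, if_neg]
    simp only [ne_eq, Prod.mk.injEq, xyz_apply_zero, xyz_apply_one] at hne ⊢
    omega

section MulG

variable (b : MvPowerSeries (Fin 3) ℂ)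

lemma coeff_xyz_zero_mul_G (j l : ℕ) : coeff (xyz 0 j l) (b * G) = 0 := by
  classical
  rw [coeff_mul]
  refine sum_eq_zero fun uv huv => ?_
  obtain ⟨-, hv⟩ : uv.1 0 = 0 ∧ uv.2 0 = 0 := by
    simpa using congrArg (· 0) (HasAntidiagonal.mem_antidiagonal.1 huv)
  rw [coeff_apply G, G, if_neg (by omega), mul_zero]

variable {b}

lemma coeff_xyz_succ_mul_G (hb : DependsOnXY b) (i j l : ℕ) :
    coeff (xyz (i + 1) j (l + 1)) (b * G) = coeff (xyz i j 0) b * ((l + 1)! : ℂ)⁻¹ := by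
  classical
  rw [coeff_mul, sum_eq_single_of_mem (xyz i j 0, xyz 1 0 (l + 1)) (by simp [xyz_add])]
  · simp [coeff_apply _ (xyz 1 0 (l + 1)), G]
  · rintro ⟨u, v⟩ huv hne
    rw [HasAntidiagonal.mem_antidiagonal, eq_xyz u, eq_xyz v, xyz_add, xyz_eq_xyz_iff] at huv
    by_contra h
    have hu := hb u (left_ne_zero_of_mul h)
    have hv : v 0 = 1 ∧ v 1 = 0 ∧ 1 ≤ v 2 := by
      by_contra hv
      exact right_ne_zero_of_mul h (by rw [coeff_apply, G, if_neg hv])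
    apply hne
    rw [eq_xyz u, eq_xyz v]
    simp only [Prod.mk.injEq, xyz_eq_xyz_iff]
    omega

lemma yzCoeff_succ_mul_G (hb : DependsOnXY b) (n : ℕ) :
    yzCoeff (n + 1) (b * G) =
      ∑ pq ∈ antidiagonal n, coeff (xyz pq.1 pq.2 0) b * ((n + pq.2 + 1)! : ℂ)⁻¹ := by
  rw [yzCoeff_apply, sum_antidiagonal_succ, coeff_xyz_zero_mul_G, zero_add]
  refine sum_congr rfl fun pq _ => ?_
  rw [add_right_comm, coeff_xyz_succ_mul_G hb]

lemma norm_yzCoeff_succ_mul_G_le (hb : DependsOnXY b) {C R : ℝ}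
    (hbound : ∀ d : Fin 3 →₀ ℕ, ‖coeff d b‖ ≤ C * R ^ (d.sum fun _ m => m))
    (n : ℕ) :
    ‖yzCoeff (n + 1) (b * G)‖ ≤ C * (R ^ n / n !) := by
  rw [yzCoeff_succ_mul_G hb]
  calc _ ≤ ∑ _pq ∈ antidiagonal n, C * R ^ n * ((n + 1)! : ℝ)⁻¹ := by
        refine norm_sum_le_of_le _ fun pq hpq => ?_
        have hcoeff : ‖coeff (xyz pq.1 pq.2 0) b‖ ≤ C * R ^ n := by
          simpa [degree_xyz, HasAntidiagonal.mem_antidiagonal.1 hpq] using hbound (xyz pq.1 pq.2 0)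
        rw [norm_mul, norm_inv, Complex.norm_natCast]
        gcongr
        · exact (norm_nonneg _).trans hcoeff
        · omega
    _ = C * (R ^ n / n !) := by
        rw [sum_const, card_antidiagonal, nsmul_eq_mul, factorial_succ]
        push_cast
        field_simp

end MulG

theorem gabrielov_counterexample :
    ¬ ∃ a b c : MvPowerSeries (Fin 3) ℂ,
      DependsOnXY a ∧ DependsOnXY b ∧
      GeomBounded a ∧ GeomBounded b ∧ GeomBounded c ∧
      eS = a * 1 + b * G + c * H := by
  rintro ⟨a, b, c, ha, hb, -, ⟨C, R, -, -, hbound⟩, -, he⟩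
  have hlarge : ∀ n, 1 ≤ n → 1 ≤ C * (R ^ n / n !) := fun n hn => by
    have h : yzCoeff (n + 1) eS = yzCoeff (n + 1) (b * G) := by
      rw [he, mul_one, map_add, map_add, yzCoeff_mul_H,
        yzCoeff_eq_zero_of_dependsOnXY ha (by omega), zero_add, add_zero]
    rw [yzCoeff_eS (by omega)] at h
    simpa [← h] using norm_yzCoeff_succ_mul_G_le hb hbound n
  have hsmall : ∀ᶠ n in Filter.atTop, C * (R ^ n / n !) < 1 :=
    ((FloorSemiring.tendsto_pow_div_factorial_atTop R).const_mul C).eventually_lt_const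
      (by norm_num)
  obtain ⟨n, hn, hsmall⟩ := (hsmall.and (Filter.eventually_ge_atTop 1)).exists
  exact (hlarge n hsmall).not_gt hn
end
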